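/- arXiv:2406.17730 — 5 statements merged into one kernel-verified Lean document; each statement's English description precedes it below -/
import Mathlib

section
/- Let A be a d×n integer matrix such that the only vector in ker(A) with all coordinates nonnegative is 0. Then the Graver basis G(A) is strongly distance reducing with respect to the 1-norm; in particular no homogeneity assumption on A is needed. -/
open Pointwise

namespace DistRed

variable {n d : ℕ}

/-- Componentwise positive part `u⁺`. -/
def posP (u : Fin n → ℤ) : Fin n → ℤ := fun i => max (u i) 0

/-- Componentwise negative part `u⁻`. -/
def negP (u : Fin n → ℤ) : Fin n → ℤ := fun i => max (-u i) 0

/-- The 1-norm `‖u‖ = ∑ᵢ |uᵢ|`. -/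
def onorm (u : Fin n → ℤ) : ℤ := ∑ i, |u i|

/-- Componentwise inequality of vectors. -/
def vle (u v : Fin n → ℤ) : Prop := ∀ i, u i ≤ v i

/-- The single move `u` reduces the 1-norm distance of `z = z⁺ - z⁻`. -/
def reducesOne (u z : Fin n → ℤ) : Prop :=
  (vle (posP u) (posP z) ∧ onorm (z - u) < onorm z) ∨
  (vle (negP u) (posP z) ∧ onorm (z + u) < onorm z) ∨
  (vle (posP u) (negP z) ∧ onorm (z + u) < onorm z) ∨
  (vle (negP u) (negP z) ∧ onorm (z - u) < onorm z)

/-- `B` reduces the distance of `z`. -/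
def reduces (B : Set (Fin n → ℤ)) (z : Fin n → ℤ) : Prop := ∃ u ∈ B, reducesOne u z

/-- `B` strongly reduces the distance of `z`. -/
def stronglyReduces (B : Set (Fin n → ℤ)) (z : Fin n → ℤ) : Prop :=
  (∃ u ∈ B, (vle (posP u) (posP z) ∧ onorm (z - u) < onorm z) ∨
            (vle (negP u) (posP z) ∧ onorm (z + u) < onorm z)) ∧
  (∃ u ∈ B, (vle (posP u) (negP z) ∧ onorm (z + u) < onorm z) ∨
            (vle (negP u) (negP z) ∧ onorm (z - u) < onorm z))

/-- `B` is distance reducing relative to the kernel `K`. -/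
def distanceReducing (K B : Set (Fin n → ℤ)) : Prop := ∀ z ∈ K, z ≠ 0 → reduces B z

/-- `B` is strongly distance reducing relative to the kernel `K`. -/
def stronglyDistanceReducing (K B : Set (Fin n → ℤ)) : Prop :=
  ∀ z ∈ K, z ≠ 0 → stronglyReduces B z

/-- The Graver basis: nonzero elements of `K` with no proper conformal decomposition. -/
def graver (K : Set (Fin n → ℤ)) : Set (Fin n → ℤ) :=
  {z | z ∈ K ∧ z ≠ 0 ∧ ¬ ∃ u v, u ∈ K ∧ v ∈ K ∧ u ≠ 0 ∧ v ≠ 0 ∧ z = u + v ∧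
      posP z = posP u + posP v ∧ negP z = negP u + negP v}

/-- `B` connects `x` and `y` through nonnegative points by moves in `B ∪ -B`. -/
def connects (B : Set (Fin n → ℤ)) (x y : Fin n → ℤ) : Prop :=
  ∃ (k : ℕ) (f : Fin (k + 1) → Fin n → ℤ),
    f 0 = x ∧ f (Fin.last k) = y ∧ (∀ i j, 0 ≤ f i j) ∧
    ∀ i : Fin k, f i.succ - f i.castSucc ∈ B ∪ -B

/-- Kernel of an integer matrix. -/
def kerM (A : Matrix (Fin d) (Fin n) ℤ) : Set (Fin n → ℤ) := {u | A.mulVec u = 0}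

/-- Markov basis of a matrix. -/
def isMarkovM (A : Matrix (Fin d) (Fin n) ℤ) (B : Set (Fin n → ℤ)) : Prop :=
  B ⊆ kerM A ∧ ∀ x y : Fin n → ℤ, (∀ j, 0 ≤ x j) → (∀ j, 0 ≤ y j) →
    A.mulVec x = A.mulVec y → connects B x y

def isMinimalMarkovM (A : Matrix (Fin d) (Fin n) ℤ) (B : Set (Fin n → ℤ)) : Prop :=
  isMarkovM A B ∧ ∀ B' ⊂ B, ¬ isMarkovM A B'

/-- Kernel of the 1×n matrix `a`. -/
def kerV (a : Fin n → ℕ) : Set (Fin n → ℤ) := {u | ∑ i, (a i : ℤ) * u i = 0}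

/-- Markov basis of a 1×n matrix. -/
def isMarkov (a : Fin n → ℕ) (B : Set (Fin n → ℤ)) : Prop :=
  B ⊆ kerV a ∧ ∀ x y : Fin n → ℤ, (∀ j, 0 ≤ x j) → (∀ j, 0 ≤ y j) →
    (∑ i, (a i : ℤ) * x i) = (∑ i, (a i : ℤ) * y i) → connects B x y

def isMinimalMarkov (a : Fin n → ℕ) (B : Set (Fin n → ℤ)) : Prop :=
  isMarkov a B ∧ ∀ B' ⊂ B, ¬ isMarkov a B'

/-- The circuit `z_{i,j}` of the 1×n matrix `a`. -/
def circuit (a : Fin n → ℕ) (i j : Fin n) : Fin n → ℤ :=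
  fun k => if k = i then ((a j / Nat.gcd (a i) (a j) : ℕ) : ℤ)
           else if k = j then -((a i / Nat.gcd (a i) (a j) : ℕ) : ℤ) else 0

/-- `B` reduces the distance of all circuits of `a`. -/
def reducesCircuits (a : Fin n → ℕ) (B : Set (Fin n → ℤ)) : Prop :=
  ∀ i j : Fin n, i < j → reduces B (circuit a i j)

/-- `a` admits a gluing of the first kind. -/
def firstKind (a : Fin n → ℕ) : Prop :=
  ∀ k : Fin n, 1 ≤ k.val →
    ∃ lam : Fin n → ℕ, (∀ i, ¬ i < k → lam i = 0) ∧
      Nat.lcm ((Finset.univ.filter (fun i : Fin n => i < k)).gcd a) (a k) = ∑ i, lam i * a i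

/-- Kernel of the submatrix of `a` indexed by `S`, as vectors supported on `S`. -/
def kerOn (a : Fin n → ℕ) (S : Finset (Fin n)) : Set (Fin n → ℤ) :=
  {u | (∀ i, i ∉ S → u i = 0) ∧ ∑ i, (a i : ℤ) * u i = 0}

/-- `a` is glued along the pair of disjoint index sets `(S, T)`. -/
def gluedOn (a : Fin n → ℕ) (S T : Finset (Fin n)) : Prop :=
  ∃ z ∈ kerOn a (S ∪ T), (∀ i, 0 < z i → i ∈ S) ∧ (∀ i, z i < 0 → i ∈ T) ∧
    ∀ w ∈ kerOn a (S ∪ T), ∃! t : (Fin n → ℤ) × (Fin n → ℤ) × ℤ,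
      t.1 ∈ kerOn a S ∧ t.2.1 ∈ kerOn a T ∧ w = t.1 + t.2.1 + t.2.2 • z

/-- Complete intersection on the index set `S` (recursively defined via gluings). -/
inductive IsCIOn (a : Fin n → ℕ) : Finset (Fin n) → Prop
  | single (i : Fin n) : IsCIOn a {i}
  | glue {S T : Finset (Fin n)} (hS : S.Nonempty) (hT : T.Nonempty)
      (hd : Disjoint S T) (hg : gluedOn a S T) (cS : IsCIOn a S) (cT : IsCIOn a T) :
      IsCIOn a (S ∪ T)

/-- `a` is a complete intersection. -/
def isCI (a : Fin n → ℕ) : Prop := IsCIOn a Finset.univ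

/-- Positive distance decomposition. -/
def posDD (K : Set (Fin n → ℤ)) (z : Fin n → ℤ) : Prop :=
  ∃ u v, u ∈ K ∧ v ∈ K ∧ u ≠ 0 ∧ v ≠ 0 ∧ z = u + v ∧ vle (posP u) (posP z) ∧
    onorm v < onorm z

/-- Negative distance decomposition. -/
def negDD (K : Set (Fin n → ℤ)) (z : Fin n → ℤ) : Prop :=
  ∃ u v, u ∈ K ∧ v ∈ K ∧ u ≠ 0 ∧ v ≠ 0 ∧ z = u + v ∧ vle (negP u) (negP z) ∧
    onorm v < onorm z

def Dplus (K : Set (Fin n → ℤ)) : Set (Fin n → ℤ) := {z | z ∈ K ∧ z ≠ 0 ∧ ¬ posDD K z}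

def Dminus (K : Set (Fin n → ℤ)) : Set (Fin n → ℤ) := {z | z ∈ K ∧ z ≠ 0 ∧ ¬ negDD K z}

/-- The distance irreducible elements `D(A)`. -/
def Dboth (K : Set (Fin n → ℤ)) : Set (Fin n → ℤ) := Dplus K ∩ Dminus K

/-- The weakly distance irreducible elements `D^w(A)`. -/
def Dweak (K : Set (Fin n → ℤ)) : Set (Fin n → ℤ) := Dplus K ∪ Dminus K

/-- The indispensable set `S(A)`. -/
def indisp (K : Set (Fin n → ℤ)) : Set (Fin n → ℤ) :=
  {z | z ∈ K ∧ z ≠ 0 ∧ ¬ ∃ u v, u ∈ K ∧ v ∈ K ∧ u ≠ 0 ∧ v ≠ 0 ∧ z = u + v ∧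
      ∀ i, 0 < u i → 0 ≤ v i}

/-- Minimally distance reducing subset of `K`. -/
def minDistRed (K B : Set (Fin n → ℤ)) : Prop :=
  B ⊆ K ∧ distanceReducing K B ∧ ∀ B' ⊂ B, ¬ distanceReducing K B'

/-- Minimally strongly distance reducing subset of `K`. -/
def minStrongDistRed (K B : Set (Fin n → ℤ)) : Prop :=
  B ⊆ K ∧ stronglyDistanceReducing K B ∧ ∀ B' ⊂ B, ¬ stronglyDistanceReducing K B'


lemma onorm_pos {u : Fin n → ℤ} (hu : u ≠ 0) : 0 < onorm u := by
  have : ∃ i, u i ≠ 0 := by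
    by_contra h
    push_neg at h
    exact hu (funext fun i => h i)
  obtain ⟨i, hi⟩ := this
  exact Finset.sum_pos' (fun j _ => abs_nonneg _)
    ⟨i, Finset.mem_univ i, abs_pos.mpr hi⟩

lemma onorm_eq_sum (u : Fin n → ℤ) : onorm u = ∑ i, (posP u i + negP u i) := by
  unfold onorm posP negP
  refine Finset.sum_congr rfl fun i _ => ?_
  rcases le_or_gt 0 (u i) with h | h <;> simp [abs_of_nonneg, abs_of_neg, h, le_of_lt] <;> omega

lemma exists_graver_conf (K : Set (Fin n → ℤ)) :
    ∀ m : ℕ, ∀ z u : Fin n → ℤ, u ∈ K → u ≠ 0 → vle (posP u) (posP z) →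
      vle (negP u) (negP z) → (onorm u).toNat ≤ m →
      ∃ g, g ∈ graver K ∧ vle (posP g) (posP z) ∧ vle (negP g) (negP z) := by
  intro m
  induction m using Nat.strong_induction_on with
  | _ m ih =>
    intro z u huK hu0 hp hn hm
    by_cases hg : u ∈ graver K
    · exact ⟨u, hg, hp, hn⟩
    · have : ∃ v w, v ∈ K ∧ w ∈ K ∧ v ≠ 0 ∧ w ≠ 0 ∧ u = v + w ∧
          posP u = posP v + posP w ∧ negP u = negP v + negP w := by
        by_contra h
        exact hg ⟨huK, hu0, h⟩
      obtain ⟨v, w, hvK, hwK, hv0, hw0, _, hpvw, hnvw⟩ := this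
      have hpv : vle (posP v) (posP z) := fun i => by
        have h1 := congrFun hpvw i
        have h2 : (0:ℤ) ≤ posP w i := le_max_right _ _
        have := hp i
        simp only [Pi.add_apply] at h1
        omega
      have hnv : vle (negP v) (negP z) := fun i => by
        have h1 := congrFun hnvw i
        have h2 : (0:ℤ) ≤ negP w i := le_max_right _ _
        have := hn i
        simp only [Pi.add_apply] at h1
        omega
      have hnorm : onorm u = onorm v + onorm w := by
        rw [onorm_eq_sum, onorm_eq_sum, onorm_eq_sum, ← Finset.sum_add_distrib]
        refine Finset.sum_congr rfl fun i _ => ?_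
        have h1 := congrFun hpvw i
        have h2 := congrFun hnvw i
        simp only [Pi.add_apply] at h1 h2
        omega
      have hwpos := onorm_pos hw0
      have hvpos := onorm_pos hv0
      have hlt : (onorm v).toNat < m := by omega
      exact ih _ hlt z v hvK hv0 hpv hnv le_rfl

lemma conf_norm_sub {z u : Fin n → ℤ} (hp : vle (posP u) (posP z))
    (hn : vle (negP u) (negP z)) : onorm (z - u) = onorm z - onorm u := by
  rw [onorm_eq_sum, onorm_eq_sum]
  unfold onorm
  rw [← Finset.sum_sub_distrib]
  refine Finset.sum_congr rfl fun i _ => ?_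
  have h1 := hp i
  have h2 := hn i
  simp only [posP, negP, Pi.sub_apply, abs_eq_max_neg] at h1 h2 ⊢
  omega

/-- The Graver basis is strongly distance reducing (no homogeneity needed). -/
theorem graver_strongly_distance_reducing {d n : ℕ} (A : Matrix (Fin d) (Fin n) ℤ)
    (hker : ∀ u ∈ kerM A, (∀ i, 0 ≤ u i) → u = 0) :
    stronglyDistanceReducing (kerM A) (graver (kerM A)) := by
  intro z hz hz0
  obtain ⟨g, hgG, hgp, hgn⟩ := exists_graver_conf (kerM A) (onorm z).toNat z z hz hz0
    (fun i => le_refl _) (fun i => le_refl _) le_rfl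
  have hg0 : g ≠ 0 := hgG.2.1
  have hlt : onorm (z - g) < onorm z := by
    rw [conf_norm_sub hgp hgn]
    have := onorm_pos hg0
    omega
  exact ⟨⟨g, hgG, Or.inl ⟨hgp, hlt⟩⟩, ⟨g, hgG, Or.inr ⟨hgn, hlt⟩⟩⟩

end DistRed
end

section
/- Let A be a d×n integer matrix such that the only vector in ker(A) with all coordinates nonnegative is 0, and let B ⊆ ker(A) be any subset. Then B is distance reducing if and only if B reduces the distance of every element of the Graver basis G(A). Similarly, B is strongly distance reducing if and only if B strongly reduces the distance of every element of G(A). -/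
open Pointwise

namespace DistRed

variable {n d : ℕ}

section Aux

lemma aux_key (g z u : ℤ) (h1 : max g 0 ≤ max z 0) (h2 : max (-g) 0 ≤ max (-z) 0)
    (h3 : max u 0 ≤ max g 0) : |z - u| - |z| ≤ |g - u| - |g| := by
  simp only [Int.abs_eq_natAbs]; omega

lemma aux_onorm_neg (z : Fin n → ℤ) : onorm (-z) = onorm z := by
  unfold onorm; exact Finset.sum_congr rfl fun i _ => by simp [abs_neg]

lemma aux_posP_neg (z : Fin n → ℤ) : posP (-z) = negP z := rfl

lemma aux_negP_neg (z : Fin n → ℤ) : negP (-z) = posP z := by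
  funext i; simp [negP, posP]

lemma aux_L1 (g z u : Fin n → ℤ) (h1 : vle (posP g) (posP z)) (h2 : vle (negP g) (negP z))
    (h3 : vle (posP u) (posP g)) (h4 : onorm (g - u) < onorm g) :
    vle (posP u) (posP z) ∧ onorm (z - u) < onorm z := by
  refine ⟨fun i => le_trans (h3 i) (h1 i), ?_⟩
  have hs : onorm (z - u) - onorm z ≤ onorm (g - u) - onorm g := by
    unfold onorm
    rw [← Finset.sum_sub_distrib, ← Finset.sum_sub_distrib]
    exact Finset.sum_le_sum fun i _ => aux_key (g i) (z i) (u i) (h1 i) (h2 i) (h3 i)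
  omega

lemma aux_L2 (g z u : Fin n → ℤ) (h1 : vle (posP g) (posP z)) (h2 : vle (negP g) (negP z))
    (h3 : vle (negP u) (posP g)) (h4 : onorm (g + u) < onorm g) :
    vle (negP u) (posP z) ∧ onorm (z + u) < onorm z := by
  have h := aux_L1 g z (-u) h1 h2 (by rw [aux_posP_neg]; exact h3)
    (by rw [sub_neg_eq_add]; exact h4)
  rw [aux_posP_neg, sub_neg_eq_add] at h
  exact h

lemma aux_L3 (g z u : Fin n → ℤ) (h1 : vle (posP g) (posP z)) (h2 : vle (negP g) (negP z))
    (h3 : vle (posP u) (negP g)) (h4 : onorm (g + u) < onorm g) :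
    vle (posP u) (negP z) ∧ onorm (z + u) < onorm z := by
  have hzu : -z - u = -(z + u) := by funext i; simp; ring
  have hgu : -g - u = -(g + u) := by funext i; simp; ring
  have h := aux_L1 (-g) (-z) u (by rw [aux_posP_neg, aux_posP_neg]; exact h2)
    (by rw [aux_negP_neg, aux_negP_neg]; exact h1)
    (by rw [aux_posP_neg]; exact h3)
    (by rw [hgu, aux_onorm_neg, aux_onorm_neg]; exact h4)
  rw [aux_posP_neg, hzu, aux_onorm_neg, aux_onorm_neg] at h
  exact h

lemma aux_L4 (g z u : Fin n → ℤ) (h1 : vle (posP g) (posP z)) (h2 : vle (negP g) (negP z))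
    (h3 : vle (negP u) (negP g)) (h4 : onorm (g - u) < onorm g) :
    vle (negP u) (negP z) ∧ onorm (z - u) < onorm z := by
  have hzu : -z - -u = -(z - u) := by funext i; simp; ring
  have hgu : -g - -u = -(g - u) := by funext i; simp; ring
  have h := aux_L1 (-g) (-z) (-u) (by rw [aux_posP_neg, aux_posP_neg]; exact h2)
    (by rw [aux_negP_neg, aux_negP_neg]; exact h1)
    (by rw [aux_posP_neg, aux_posP_neg]; exact h3)
    (by rw [hgu, aux_onorm_neg, aux_onorm_neg]; exact h4)
  rw [aux_posP_neg, hzu, aux_onorm_neg, aux_onorm_neg] at h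
  exact h

lemma aux_reducesOne_trans (g z u : Fin n → ℤ) (h1 : vle (posP g) (posP z))
    (h2 : vle (negP g) (negP z)) (h : reducesOne u g) : reducesOne u z := by
  rcases h with ⟨h3, h4⟩ | ⟨h3, h4⟩ | ⟨h3, h4⟩ | ⟨h3, h4⟩
  · exact Or.inl (aux_L1 g z u h1 h2 h3 h4)
  · exact Or.inr (Or.inl (aux_L2 g z u h1 h2 h3 h4))
  · exact Or.inr (Or.inr (Or.inl (aux_L3 g z u h1 h2 h3 h4)))
  · exact Or.inr (Or.inr (Or.inr (aux_L4 g z u h1 h2 h3 h4)))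

lemma aux_strong_trans (B : Set (Fin n → ℤ)) (g z : Fin n → ℤ) (h1 : vle (posP g) (posP z))
    (h2 : vle (negP g) (negP z)) (h : stronglyReduces B g) : stronglyReduces B z := by
  obtain ⟨⟨u, hu, hc⟩, ⟨u', hu', hc'⟩⟩ := h
  refine ⟨⟨u, hu, ?_⟩, ⟨u', hu', ?_⟩⟩
  · rcases hc with ⟨h3, h4⟩ | ⟨h3, h4⟩
    · exact Or.inl (aux_L1 g z u h1 h2 h3 h4)
    · exact Or.inr (aux_L2 g z u h1 h2 h3 h4)
  · rcases hc' with ⟨h3, h4⟩ | ⟨h3, h4⟩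
    · exact Or.inl (aux_L3 g z u' h1 h2 h3 h4)
    · exact Or.inr (aux_L4 g z u' h1 h2 h3 h4)

lemma aux_onorm_pos (z : Fin n → ℤ) (hz : z ≠ 0) : 0 < onorm z := by
  obtain ⟨i, hi⟩ := Function.ne_iff.mp hz
  have h1 : |z i| ≤ onorm z :=
    Finset.single_le_sum (f := fun j => |z j|) (fun j _ => abs_nonneg _) (Finset.mem_univ i)
  exact lt_of_lt_of_le (abs_pos.mpr hi) h1

lemma aux_exists_graver (K : Set (Fin n → ℤ)) :
    ∀ N : ℕ, ∀ z : Fin n → ℤ, onorm z ≤ (N : ℤ) → z ∈ K → z ≠ 0 →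
    ∃ g ∈ graver K, vle (posP g) (posP z) ∧ vle (negP g) (negP z) := by
  intro N
  induction N with
  | zero =>
    intro z hN hz hz0
    have := aux_onorm_pos z hz0
    omega
  | succ N ih =>
    intro z hN hz hz0
    by_cases hg : ∃ u v, u ∈ K ∧ v ∈ K ∧ u ≠ 0 ∧ v ≠ 0 ∧ z = u + v ∧
        posP z = posP u + posP v ∧ negP z = negP u + negP v
    · obtain ⟨u, v, hu, hv, hu0, hv0, _, hp, hn⟩ := hg
      have hpu : vle (posP u) (posP z) := fun i => by
        have h := congrFun hp i
        simp only [posP, Pi.add_apply] at h ⊢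
        omega
      have hnu : vle (negP u) (negP z) := fun i => by
        have h := congrFun hn i
        simp only [negP, Pi.add_apply] at h ⊢
        omega
      have honorm : onorm z = onorm u + onorm v := by
        unfold onorm
        rw [← Finset.sum_add_distrib]
        refine Finset.sum_congr rfl fun i _ => ?_
        have h1 := congrFun hp i
        have h2 := congrFun hn i
        simp only [posP, negP, Pi.add_apply] at h1 h2
        simp only [Int.abs_eq_natAbs]
        omega
      have hvpos := aux_onorm_pos v hv0
      have hun : onorm u ≤ (N : ℤ) := by omega
      obtain ⟨g, hgG, h1, h2⟩ := ih u hun hu hu0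
      exact ⟨g, hgG, fun i => le_trans (h1 i) (hpu i), fun i => le_trans (h2 i) (hnu i)⟩
    · exact ⟨z, ⟨hz, hz0, hg⟩, fun i => le_rfl, fun i => le_rfl⟩

end Aux

/-- `B` is (strongly) distance reducing iff it (strongly) reduces the
distance of every element of the Graver basis. -/
theorem distance_reducing_iff_reduces_graver {d n : ℕ} (A : Matrix (Fin d) (Fin n) ℤ)
    (hker : ∀ u ∈ kerM A, (∀ i, 0 ≤ u i) → u = 0)
    (B : Set (Fin n → ℤ)) (hB : B ⊆ kerM A) :
    (distanceReducing (kerM A) B ↔ ∀ z ∈ graver (kerM A), reduces B z) ∧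
    (stronglyDistanceReducing (kerM A) B ↔ ∀ z ∈ graver (kerM A), stronglyReduces B z) := by
  constructor
  · constructor
    · intro h z hz
      exact h z hz.1 hz.2.1
    · intro h z hz hz0
      obtain ⟨g, hgG, h1, h2⟩ := aux_exists_graver (kerM A) (onorm z).toNat z
        (Int.self_le_toNat _) hz hz0
      obtain ⟨u, hu, hru⟩ := h g hgG
      exact ⟨u, hu, aux_reducesOne_trans g z u h1 h2 hru⟩
  · constructor
    · intro h z hz
      exact h z hz.1 hz.2.1
    · intro h z hz hz0
      obtain ⟨g, hgG, h1, h2⟩ := aux_exists_graver (kerM A) (onorm z).toNat z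
        (Int.self_le_toNat _) hz hz0
      exact aux_strong_trans B g z h1 h2 (h g hgG)


end DistRed
end

section
/- Let A be a d×n integer matrix such that the only vector in ker(A) with all coordinates nonnegative is 0. Suppose b ∈ ker(A) is such that the singleton {b} reduces the distance of an element x ∈ ker(A). Suppose z ∈ ker(A) admits a conformal decomposition z = x + y, i.e., y ∈ ker(A), z⁺ = x⁺ + y⁺ and z⁻ = x⁻ + y⁻. Then {b} reduces the distance of z. -/
open Pointwise

namespace DistRed

variable {n d : ℕ}

/-- Distance reduction is inherited along conformal decompositions. -/
theorem reduces_of_conformal_decomposition {d n : ℕ} (A : Matrix (Fin d) (Fin n) ℤ)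
    (hker : ∀ u ∈ kerM A, (∀ i, 0 ≤ u i) → u = 0)
    (b x y z : Fin n → ℤ) (hb : b ∈ kerM A) (hx : x ∈ kerM A) (hy : y ∈ kerM A)
    (hz : z ∈ kerM A)
    (hbx : reduces {b} x)
    (hsum : z = x + y) (hpos : posP z = posP x + posP y) (hneg : negP z = negP x + negP y) :

    reduces {b} z := by
  have habs : ∀ w : Fin n → ℤ, ∀ i, |w i| = posP w i + negP w i := by
    intro w i
    simp only [posP, negP]
    rcases le_total 0 (w i) with h | h
    · rw [abs_of_nonneg h, max_eq_left h, max_eq_right (by omega)]; ring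
    · rw [abs_of_nonpos h, max_eq_right h, max_eq_left (by omega)]; ring
  have hnormsum : onorm z = onorm x + onorm y := by
    unfold onorm
    rw [← Finset.sum_add_distrib]
    apply Finset.sum_congr rfl
    intro i _
    rw [habs, habs, habs, hpos, hneg]
    simp [Pi.add_apply]; ring
  have hposle : vle (posP x) (posP z) := by
    intro i; rw [hpos]; simp only [Pi.add_apply]
    have : 0 ≤ posP y i := le_max_right _ _
    omega
  have hnegle : vle (negP x) (negP z) := by
    intro i; rw [hneg]; simp only [Pi.add_apply]
    have : 0 ≤ negP y i := le_max_right _ _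
    omega
  have htri : ∀ c : Fin n → ℤ, onorm (z + c) ≤ onorm (x + c) + onorm y := by
    intro c
    unfold onorm
    rw [← Finset.sum_add_distrib]
    apply Finset.sum_le_sum
    intro i _
    have : (z + c) i = (x + c) i + y i := by simp [hsum]; ring
    rw [this]
    exact abs_add_le _ _
  have htri2 : ∀ c : Fin n → ℤ, onorm (z - c) ≤ onorm (x - c) + onorm y := by
    intro c
    have := htri (-c)
    simpa [sub_eq_add_neg] using this
  obtain ⟨u, hu, hcase⟩ := hbx
  rcases hu with rfl
  refine ⟨u, rfl, ?_⟩
  have hA := htri u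
  have hB := htri2 u
  rcases hcase with ⟨h1, h2⟩ | ⟨h1, h2⟩ | ⟨h1, h2⟩ | ⟨h1, h2⟩
  · exact Or.inl ⟨fun i => le_trans (h1 i) (hposle i), by linarith⟩
  · exact Or.inr (Or.inl ⟨fun i => le_trans (h1 i) (hposle i), by linarith⟩)
  · exact Or.inr (Or.inr (Or.inl ⟨fun i => le_trans (h1 i) (hnegle i), by linarith⟩))
  · exact Or.inr (Or.inr (Or.inr ⟨fun i => le_trans (h1 i) (hnegle i), by linarith⟩))

end DistRed
end

section
/- Let A = (a₁, a₂, a₃) be a 1×3 matrix of pairwise distinct positive integers with a₁ < a₂. Let M = {b, c} be a minimal Markov basis for A where b = (b₁, −b₂, 0) with b₁ > b₂ > 0 and c = (c₁, c₂, −c₃) with c₃ > 0 and c₁, c₂ ≥ 0, and assume c is a minimal type 3 element, i.e., for every z ∈ ker(A) with z₃ < 0 and z₁, z₂ ≥ 0 one has c₃ ≤ −z₃. Then the following are equivalent: (1) M is distance reducing; (2) M reduces the distance of the circuit z_{2,3} = (0, a₃/g, −a₂/g) where g = gcd(a₂, a₃); (3) c₁ < c₂ + c₃. -/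
open Pointwise

namespace DistRed

variable {n d : ℕ}

section AuxProof

lemma max_le_max0 {x y : ℤ} (h : x ≤ 0 ∨ x ≤ y) : max x 0 ≤ max y 0 := by
  rcases h with h | h
  · simpa [max_eq_right h] using le_max_right y 0
  · exact max_le_max h le_rfl

lemma vle3 (u v : Fin 3 → ℤ) (h0 : u 0 ≤ v 0) (h1 : u 1 ≤ v 1) (h2 : u 2 ≤ v 2) :
    vle u v := by
  intro i; fin_cases i <;> assumption

lemma onorm_neg' {m : ℕ} (w : Fin m → ℤ) : onorm (-w) = onorm w := by
  simp [onorm]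

lemma onorm3 (w : Fin 3 → ℤ) : onorm w = |w 0| + |w 1| + |w 2| := by
  simp [onorm, Fin.sum_univ_three]

lemma reducesOne_neg_iff {m : ℕ} (u z : Fin m → ℤ) :
    reducesOne u (-z) ↔ reducesOne u z := by
  have hp : posP (-z) = negP z := rfl
  have hn : negP (-z) = posP z := by funext i; simp [negP, posP]
  have e1 : -z - u = -(z + u) := by abel
  have e2 : -z + u = -(z - u) := by abel
  rw [reducesOne, reducesOne, hp, hn, e1, e2]
  simp only [onorm_neg']
  tauto

lemma connects_span {b c x y : Fin 3 → ℤ} (h : connects {b, c} x y) :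
    ∃ α β : ℤ, ∀ i, y i - x i = α * b i + β * c i := by
  obtain ⟨k, f, h0, hl, -, hstep⟩ := h
  have H : ∀ m : ℕ, ∀ hm : m < k + 1,
      ∃ α β : ℤ, ∀ i, f ⟨m, hm⟩ i - f 0 i = α * b i + β * c i := by
    intro m
    induction m with
    | zero =>
      intro hm
      exact ⟨0, 0, fun i => by simp [show (⟨0, hm⟩ : Fin (k+1)) = 0 from rfl]⟩
    | succ m ih =>
      intro hm
      have hmk : m < k := Nat.lt_of_succ_lt_succ hm
      obtain ⟨α, β, hab⟩ := ih (Nat.lt_of_succ_lt hm)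
      have hs := hstep ⟨m, hmk⟩
      simp only [Set.mem_union, Set.mem_insert_iff, Set.mem_singleton_iff, Set.mem_neg] at hs
      have efs : (⟨m, hmk⟩ : Fin k).succ = (⟨m+1, hm⟩ : Fin (k+1)) := rfl
      have efc : (⟨m, hmk⟩ : Fin k).castSucc = (⟨m, Nat.lt_of_succ_lt hm⟩ : Fin (k+1)) := rfl
      rw [efs, efc] at hs
      rcases hs with (hu | hu) | (hu | hu)
      · refine ⟨α + 1, β, fun i => ?_⟩
        have h1 := congrFun hu i
        simp only [Pi.sub_apply] at h1
        linear_combination h1 + hab i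
      · refine ⟨α, β + 1, fun i => ?_⟩
        have h1 := congrFun hu i
        simp only [Pi.sub_apply] at h1
        linear_combination h1 + hab i
      · refine ⟨α - 1, β, fun i => ?_⟩
        have h1 := congrFun hu i
        simp only [Pi.neg_apply, Pi.sub_apply] at h1
        linear_combination - h1 + hab i
      · refine ⟨α, β - 1, fun i => ?_⟩
        have h1 := congrFun hu i
        simp only [Pi.neg_apply, Pi.sub_apply] at h1
        linear_combination - h1 + hab i
  obtain ⟨α, β, hab⟩ := H k (Nat.lt_succ_self k)
  refine ⟨α, β, fun i => ?_⟩
  have h1 := hab i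
  have e0 : f 0 = x := h0
  have el : f ⟨k, Nat.lt_succ_self k⟩ = y := hl
  rw [e0, el] at h1
  exact h1

end AuxProof
section KeyLemmas

lemma key31 (b₁ b₂ c₁ c₂ c₃ α β : ℤ) (z : Fin 3 → ℤ)
    (hb₂ : 0 < b₂) (hb : b₂ < b₁) (hc₃ : 0 < c₃) (hc₁ : 0 ≤ c₁) (hc₂ : 0 ≤ c₂)
    (h3 : c₁ < c₂ + c₃)
    (h0 : z 0 = α * b₁ + β * c₁) (h1 : z 1 = -α * b₂ + β * c₂) (h2 : z 2 = -β * c₃)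
    (hz : z ≠ 0) (hβ : 0 ≤ β) :
    reducesOne ![b₁, -b₂, 0] z ∨ reducesOne ![c₁, c₂, -c₃] z := by
  have hb₁ : 0 < b₁ := hb₂.trans hb
  rcases hβ.lt_or_eq with hβpos | hβ0
  · have hβ1 : 1 ≤ β := hβpos
    rcases lt_or_ge (z 1) c₂ with hy | hy
    · -- z 1 < c₂ : use b, case 1
      have hα1 : 1 ≤ α := by nlinarith [mul_nonneg (by linarith : (0:ℤ) ≤ β - 1) hc₂]
      have hz0 : b₁ ≤ z 0 := by
        nlinarith [mul_nonneg (by linarith : (0:ℤ) ≤ α - 1) hb₁.le,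
          mul_nonneg (by linarith : (0:ℤ) ≤ β) hc₁]
      left; left
      constructor
      · refine vle3 _ _ ?_ ?_ ?_ <;>
          simp only [posP, Matrix.cons_val_zero, Matrix.cons_val_one, Matrix.head_cons,
            Matrix.cons_val_two, Matrix.tail_cons]
        · exact max_le_max0 (Or.inr hz0)
        · exact max_le_max0 (Or.inl (by linarith))
        · exact max_le_max0 (Or.inl le_rfl)
      · rw [onorm3, onorm3]
        have e0 : (z - ![b₁,-b₂,0]) 0 = z 0 - b₁ := by
          simp only [Pi.sub_apply, Matrix.cons_val_zero]
        have e1 : (z - ![b₁,-b₂,0]) 1 = z 1 + b₂ := by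
          simp only [Pi.sub_apply, Matrix.cons_val_one, Matrix.cons_val_zero, Matrix.head_cons]; ring
        have e2 : (z - ![b₁,-b₂,0]) 2 = z 2 := by
          simp only [Pi.sub_apply, Matrix.cons_val_two, Matrix.tail_cons, Matrix.head_cons]; ring
        rw [e0, e1, e2]
        have k1 : |z 1 + b₂| ≤ |z 1| + b₂ := by
          calc |z 1 + b₂| ≤ |z 1| + |b₂| := abs_add_le _ _
            _ = |z 1| + b₂ := by rw [abs_of_pos hb₂]
        rw [abs_of_nonneg (by linarith : (0:ℤ) ≤ z 0 - b₁),
            abs_of_nonneg (by linarith : (0:ℤ) ≤ z 0)]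
        linarith
    · -- c₂ ≤ z 1 : use c, case 4
      have hz2 : z 2 ≤ -c₃ := by
        nlinarith [mul_nonneg (by linarith : (0:ℤ) ≤ β - 1) hc₃.le]
      right; right; right; right
      constructor
      · refine vle3 _ _ ?_ ?_ ?_ <;>
          simp only [negP, Matrix.cons_val_zero, Matrix.cons_val_one, Matrix.head_cons,
            Matrix.cons_val_two, Matrix.tail_cons, neg_neg]
        · exact max_le_max0 (Or.inl (by linarith))
        · exact max_le_max0 (Or.inl (by linarith))
        · exact max_le_max0 (Or.inr (by linarith))
      · rw [onorm3, onorm3]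
        have e0 : (z - ![c₁,c₂,-c₃]) 0 = z 0 - c₁ := by
          simp only [Pi.sub_apply, Matrix.cons_val_zero]
        have e1 : (z - ![c₁,c₂,-c₃]) 1 = z 1 - c₂ := by
          simp only [Pi.sub_apply, Matrix.cons_val_one, Matrix.cons_val_zero, Matrix.head_cons]
        have e2 : (z - ![c₁,c₂,-c₃]) 2 = z 2 + c₃ := by
          simp only [Pi.sub_apply, Matrix.cons_val_two, Matrix.tail_cons, Matrix.head_cons]; ring
        rw [e0, e1, e2]
        have k0 : |z 0 - c₁| ≤ |z 0| + c₁ := by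
          calc |z 0 - c₁| ≤ |z 0| + |c₁| := abs_sub _ _
            _ = |z 0| + c₁ := by rw [abs_of_nonneg hc₁]
        rw [abs_of_nonneg (by linarith : (0:ℤ) ≤ z 1 - c₂),
            abs_of_nonneg (by linarith : (0:ℤ) ≤ z 1),
            abs_of_nonpos (by linarith : z 2 + c₃ ≤ 0),
            abs_of_nonpos (by linarith : z 2 ≤ 0)]
        linarith
  · -- β = 0
    have h0' : z 0 = α * b₁ := by rw [h0, ← hβ0]; ring
    have h1' : z 1 = -(α * b₂) := by rw [h1, ← hβ0]; ring
    have h2' : z 2 = 0 := by rw [h2, ← hβ0]; ring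
    have hα : α ≠ 0 := by
      intro h
      apply hz
      funext i
      fin_cases i <;> simp [h0', h1', h2', h]
    rcases hα.lt_or_gt with hneg | hpos
    · -- α ≤ -1 : use b, case 2
      have hα1 : α ≤ -1 := by linarith
      have hz1 : b₂ ≤ z 1 := by nlinarith
      have hz0 : z 0 ≤ -b₁ := by nlinarith
      left; right; left
      constructor
      · refine vle3 _ _ ?_ ?_ ?_ <;>
          simp only [posP, negP, Matrix.cons_val_zero, Matrix.cons_val_one, Matrix.head_cons,
            Matrix.cons_val_two, Matrix.tail_cons, neg_neg, neg_zero]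
        · exact max_le_max0 (Or.inl (by linarith))
        · exact max_le_max0 (Or.inr hz1)
        · exact max_le_max0 (Or.inl le_rfl)
      · rw [onorm3, onorm3]
        have e0 : (z + ![b₁,-b₂,0]) 0 = z 0 + b₁ := by
          simp only [Pi.add_apply, Matrix.cons_val_zero]
        have e1 : (z + ![b₁,-b₂,0]) 1 = z 1 - b₂ := by
          simp only [Pi.add_apply, Matrix.cons_val_one, Matrix.cons_val_zero, Matrix.head_cons]; ring
        have e2 : (z + ![b₁,-b₂,0]) 2 = z 2 := by
          simp only [Pi.add_apply, Matrix.cons_val_two, Matrix.tail_cons, Matrix.head_cons]; ring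
        rw [e0, e1, e2]
        rw [abs_of_nonpos (by linarith : z 0 + b₁ ≤ 0),
            abs_of_nonpos (by linarith : z 0 ≤ 0),
            abs_of_nonneg (by linarith : (0:ℤ) ≤ z 1 - b₂),
            abs_of_nonneg (by linarith : (0:ℤ) ≤ z 1)]
        linarith
    · -- α ≥ 1 : use b, case 1
      have hα1 : 1 ≤ α := hpos
      have hz1 : z 1 ≤ -b₂ := by nlinarith
      have hz0 : b₁ ≤ z 0 := by nlinarith
      left; left
      constructor
      · refine vle3 _ _ ?_ ?_ ?_ <;>
          simp only [posP, Matrix.cons_val_zero, Matrix.cons_val_one, Matrix.head_cons,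
            Matrix.cons_val_two, Matrix.tail_cons]
        · exact max_le_max0 (Or.inr hz0)
        · exact max_le_max0 (Or.inl (by linarith))
        · exact max_le_max0 (Or.inl le_rfl)
      · rw [onorm3, onorm3]
        have e0 : (z - ![b₁,-b₂,0]) 0 = z 0 - b₁ := by
          simp only [Pi.sub_apply, Matrix.cons_val_zero]
        have e1 : (z - ![b₁,-b₂,0]) 1 = z 1 + b₂ := by
          simp only [Pi.sub_apply, Matrix.cons_val_one, Matrix.cons_val_zero, Matrix.head_cons]; ring
        have e2 : (z - ![b₁,-b₂,0]) 2 = z 2 := by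
          simp only [Pi.sub_apply, Matrix.cons_val_two, Matrix.tail_cons, Matrix.head_cons]; ring
        rw [e0, e1, e2]
        rw [abs_of_nonneg (by linarith : (0:ℤ) ≤ z 0 - b₁),
            abs_of_nonneg (by linarith : (0:ℤ) ≤ z 0),
            abs_of_nonpos (by linarith : z 1 + b₂ ≤ 0),
            abs_of_nonpos (by linarith : z 1 ≤ 0)]
        linarith

lemma key23 (b₁ b₂ c₁ c₂ c₃ P Q A0 A1 A2 : ℤ)
    (hb₂ : 0 < b₂) (hb : b₂ < b₁) (hc₃ : 0 < c₃) (hc₁ : 0 ≤ c₁) (hc₂ : 0 ≤ c₂)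
    (hA2 : 0 < A2) (kc : A0 * c₁ + A1 * c₂ = A2 * c₃)
    (hP : 0 ≤ P) (hQ : 0 < Q) (hc₂P : c₂ ≤ P) (hc₃Q : c₃ ≤ Q)
    (h : reducesOne ![b₁,-b₂,0] ![0,P,-Q] ∨ reducesOne ![c₁,c₂,-c₃] ![0,P,-Q]) :
    c₁ < c₂ + c₃ := by
  have hb₁ : 0 < b₂ := hb₂
  have pz : posP ![(0:ℤ),P,-Q] = ![0,P,0] := by
    funext i; fin_cases i
    · simp [posP]
    · simpa [posP] using max_eq_left hP
    · simpa [posP] using max_eq_right (by linarith : -Q ≤ (0:ℤ))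
  have nz : negP ![(0:ℤ),P,-Q] = ![0,0,Q] := by
    funext i; fin_cases i
    · simp [negP]
    · simpa [negP] using max_eq_right (by linarith : -P ≤ (0:ℤ))
    · simpa [negP] using max_eq_left hQ.le
  have onz : onorm ![(0:ℤ),P,-Q] = P + Q := by
    rw [onorm3]
    simp only [Matrix.cons_val_zero, Matrix.cons_val_one, Matrix.head_cons,
      Matrix.cons_val_two, Matrix.tail_cons, abs_zero, abs_neg]
    rw [abs_of_nonneg hP, abs_of_nonneg hQ.le]
    ring
  rcases h with (⟨hv,hn⟩|⟨hv,hn⟩|⟨hv,hn⟩|⟨hv,hn⟩) | (⟨hv,hn⟩|⟨hv,hn⟩|⟨hv,hn⟩|⟨hv,hn⟩)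
  · -- b case 1 : impossible
    have h0 := hv 0
    rw [pz] at h0
    simp only [posP, Matrix.cons_val_zero] at h0
    have := le_max_left b₁ (0:ℤ)
    linarith
  · -- b case 2 : norm fails
    have h1 := hv 1
    rw [pz] at h1
    simp only [negP, Matrix.cons_val_one, Matrix.cons_val_zero, Matrix.head_cons, neg_neg] at h1
    have hb₂P : b₂ ≤ P := le_trans (le_max_left b₂ (0:ℤ)) h1
    have e0 : (![(0:ℤ),P,-Q] + ![b₁,-b₂,0]) 0 = b₁ := by
      simp only [Pi.add_apply, Matrix.cons_val_zero]; ring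
    have e1 : (![(0:ℤ),P,-Q] + ![b₁,-b₂,0]) 1 = P - b₂ := by
      simp only [Pi.add_apply, Matrix.cons_val_one, Matrix.cons_val_zero, Matrix.head_cons]; ring
    have e2 : (![(0:ℤ),P,-Q] + ![b₁,-b₂,0]) 2 = -Q := by
      simp only [Pi.add_apply, Matrix.cons_val_two, Matrix.tail_cons, Matrix.head_cons]; ring
    rw [onz, onorm3, e0, e1, e2, abs_neg] at hn
    rw [abs_of_nonneg (by linarith : (0:ℤ) ≤ b₁), abs_of_nonneg (by linarith : (0:ℤ) ≤ P - b₂),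
      abs_of_nonneg hQ.le] at hn
    linarith
  · -- b case 3 : impossible
    have h0 := hv 0
    rw [nz] at h0
    simp only [posP, Matrix.cons_val_zero] at h0
    have := le_max_left b₁ (0:ℤ)
    linarith
  · -- b case 4 : impossible
    have h1 := hv 1
    rw [nz] at h1
    simp only [negP, Matrix.cons_val_one, Matrix.cons_val_zero, Matrix.head_cons, neg_neg] at h1
    have := le_max_left b₂ (0:ℤ)
    linarith
  · -- c case 1 : c₁ ≤ 0
    have h0 := hv 0
    rw [pz] at h0
    simp only [posP, Matrix.cons_val_zero] at h0
    have := le_max_left c₁ (0:ℤ)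
    linarith
  · -- c case 2 : impossible
    have h2 := hv 2
    rw [pz] at h2
    simp only [negP, Matrix.cons_val_two, Matrix.tail_cons, Matrix.head_cons, neg_neg] at h2
    have := le_max_left c₃ (0:ℤ)
    linarith
  · -- c case 3 : impossible
    have h0 := hv 0
    have h1 := hv 1
    rw [nz] at h0 h1
    simp only [posP, Matrix.cons_val_zero, Matrix.cons_val_one, Matrix.head_cons] at h0 h1
    have l0 := le_max_left c₁ (0:ℤ)
    have l1 := le_max_left c₂ (0:ℤ)
    have hc10 : c₁ = 0 := le_antisymm (by linarith) hc₁
    have hc20 : c₂ = 0 := le_antisymm (by linarith) hc₂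
    rw [hc10, hc20] at kc
    nlinarith [mul_pos hA2 hc₃]
  · -- c case 4 : gives the bound
    have e0 : (![(0:ℤ),P,-Q] - ![c₁,c₂,-c₃]) 0 = -c₁ := by
      simp only [Pi.sub_apply, Matrix.cons_val_zero]; ring
    have e1 : (![(0:ℤ),P,-Q] - ![c₁,c₂,-c₃]) 1 = P - c₂ := by
      simp only [Pi.sub_apply, Matrix.cons_val_one, Matrix.cons_val_zero, Matrix.head_cons]
    have e2 : (![(0:ℤ),P,-Q] - ![c₁,c₂,-c₃]) 2 = -(Q - c₃) := by
      simp only [Pi.sub_apply, Matrix.cons_val_two, Matrix.tail_cons, Matrix.head_cons]; ring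
    rw [onz, onorm3, e0, e1, e2, abs_neg, abs_neg] at hn
    rw [abs_of_nonneg hc₁, abs_of_nonneg (by linarith : (0:ℤ) ≤ P - c₂),
      abs_of_nonneg (by linarith : (0:ℤ) ≤ Q - c₃)] at hn
    linarith

end KeyLemmas
set_option maxHeartbeats 1000000 in
/-- dimension 3 complete intersection. -/
theorem dim3_ci (a : Fin 3 → ℕ) (ha : ∀ i, 0 < a i) (hinj : Function.Injective a)
    (h12 : a 0 < a 1)
    (b₁ b₂ c₁ c₂ c₃ : ℤ) (hb₂ : 0 < b₂) (hb : b₂ < b₁) (hc₃ : 0 < c₃)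
    (hc₁ : 0 ≤ c₁) (hc₂ : 0 ≤ c₂)
    (hmin3 : ∀ z ∈ kerV a, z 2 < 0 → 0 ≤ z 0 → 0 ≤ z 1 → c₃ ≤ -(z 2))
    (M : Set (Fin 3 → ℤ)) (hMdef : M = {![b₁, -b₂, 0], ![c₁, c₂, -c₃]})
    (hmark : isMinimalMarkov a M) :
    (distanceReducing (kerV a) M ↔ reduces M (circuit a 1 2)) ∧
    (distanceReducing (kerV a) M ↔ c₁ < c₂ + c₃) := by
  have hb₁ : 0 < b₁ := hb₂.trans hb
  have ha2 : (0:ℤ) < (a 2 : ℤ) := by exact_mod_cast ha 2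
  -- membership of the two moves
  have hbM : ![b₁, -b₂, 0] ∈ M := by rw [hMdef]; exact Set.mem_insert _ _
  have hcM : ![c₁, c₂, -c₃] ∈ M := by
    rw [hMdef]; exact Set.mem_insert_of_mem _ rfl
  have hker : M ⊆ kerV a := hmark.1.1
  have hcK := hker hcM
  simp only [kerV, Set.mem_setOf_eq, Fin.sum_univ_three, Matrix.cons_val_zero,
    Matrix.cons_val_one, Matrix.head_cons, Matrix.cons_val_two, Matrix.tail_cons] at hcK
  -- the span property
  have hspan : ∀ z ∈ kerV a, ∃ α β : ℤ,
      z 0 = α * b₁ + β * c₁ ∧ z 1 = -α * b₂ + β * c₂ ∧ z 2 = -β * c₃ := by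
    intro z hz
    have hzsum : (a 0 : ℤ) * z 0 + (a 1 : ℤ) * z 1 + (a 2 : ℤ) * z 2 = 0 := by
      have h := hz
      simp only [kerV, Set.mem_setOf_eq, Fin.sum_univ_three] at h
      exact h
    have pn : ∀ i, posP z i - negP z i = z i := by
      intro i
      show max (z i) 0 - max (-z i) 0 = z i
      rcases le_total 0 (z i) with h | h
      · rw [max_eq_left h, max_eq_right (by linarith : -z i ≤ 0)]; ring
      · rw [max_eq_right h, max_eq_left (by linarith : (0:ℤ) ≤ -z i)]; ring
    have hx : ∀ j, 0 ≤ posP z j := fun j => le_max_right _ _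
    have hy : ∀ j, 0 ≤ negP z j := fun j => le_max_right _ _
    have heq : (∑ i, (a i : ℤ) * posP z i) = ∑ i, (a i : ℤ) * negP z i := by
      rw [Fin.sum_univ_three, Fin.sum_univ_three]
      linear_combination (a 0 : ℤ) * pn 0 + (a 1 : ℤ) * pn 1 + (a 2 : ℤ) * pn 2 + hzsum
    have hcon := hmark.1.2 (posP z) (negP z) hx hy heq
    rw [hMdef] at hcon
    obtain ⟨α, β, hab⟩ := connects_span hcon
    have g0 := hab 0
    have g1 := hab 1
    have g2 := hab 2
    simp only [Matrix.cons_val_zero, Matrix.cons_val_one, Matrix.head_cons,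
      Matrix.cons_val_two, Matrix.tail_cons] at g0 g1 g2
    exact ⟨-α, -β, by linear_combination - pn 0 - g0, by linear_combination - pn 1 - g1,
      by linear_combination - pn 2 - g2⟩
  -- circuit facts
  have hgdvd1 : Nat.gcd (a 1) (a 2) ∣ a 1 := Nat.gcd_dvd_left _ _
  have hgdvd2 : Nat.gcd (a 1) (a 2) ∣ a 2 := Nat.gcd_dvd_right _ _
  have hgpos : 0 < Nat.gcd (a 1) (a 2) := Nat.gcd_pos_of_pos_left _ (ha 1)
  obtain ⟨Pn, hPn⟩ : ∃ x : ℕ, a 2 / Nat.gcd (a 1) (a 2) = x := ⟨_, rfl⟩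
  obtain ⟨Qn, hQn⟩ : ∃ x : ℕ, a 1 / Nat.gcd (a 1) (a 2) = x := ⟨_, rfl⟩
  have hPmul : Nat.gcd (a 1) (a 2) * Pn = a 2 := by
    rw [← hPn]; exact Nat.mul_div_cancel' hgdvd2
  have hQmul : Nat.gcd (a 1) (a 2) * Qn = a 1 := by
    rw [← hQn]; exact Nat.mul_div_cancel' hgdvd1
  have hPpos : 0 < Pn := by
    rw [← hPn]; exact Nat.div_pos (Nat.le_of_dvd (ha 2) hgdvd2) hgpos
  have hQpos : 0 < Qn := by
    rw [← hQn]; exact Nat.div_pos (Nat.le_of_dvd (ha 1) hgdvd1) hgpos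
  have hP0 : (0:ℤ) < (Pn:ℤ) := by exact_mod_cast hPpos
  have hQ0 : (0:ℤ) < (Qn:ℤ) := by exact_mod_cast hQpos
  have hPQ : (a 1 : ℤ) * (Pn:ℤ) = (a 2 : ℤ) * (Qn:ℤ) := by
    have h : a 1 * Pn = a 2 * Qn := by
      calc a 1 * Pn = Nat.gcd (a 1) (a 2) * Qn * Pn := by rw [hQmul]
        _ = Nat.gcd (a 1) (a 2) * Pn * Qn := by ring
        _ = a 2 * Qn := by rw [hPmul]
    exact_mod_cast h
  have hcirc : circuit a 1 2 = ![0, (Pn:ℤ), -(Qn:ℤ)] := by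
    funext i
    fin_cases i
    · simp [circuit]
    · simp [circuit, hPn]
    · simp [circuit, hQn]
  have hcircK : circuit a 1 2 ∈ kerV a := by
    simp only [kerV, Set.mem_setOf_eq, Fin.sum_univ_three, hcirc, Matrix.cons_val_zero,
      Matrix.cons_val_one, Matrix.head_cons, Matrix.cons_val_two, Matrix.tail_cons]
    linarith [hPQ]
  have hcircne : circuit a 1 2 ≠ 0 := by
    rw [hcirc]
    intro h
    have h2 := congrFun h 2
    simp only [Matrix.cons_val_two, Matrix.tail_cons, Matrix.head_cons, Pi.zero_apply,
      neg_eq_zero] at h2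
    linarith
  -- c₃ ≤ Q
  have hc₃Q : c₃ ≤ (Qn:ℤ) := by
    have h := hmin3 (circuit a 1 2) hcircK
    rw [hcirc] at h
    simp only [Matrix.cons_val_zero, Matrix.cons_val_one, Matrix.head_cons,
      Matrix.cons_val_two, Matrix.tail_cons] at h
    have := h (by linarith) (by linarith) (by linarith)
    linarith
  -- c₂ ≤ P
  have hc₂P : c₂ ≤ (Pn:ℤ) := by
    obtain ⟨α, β, e0, e1, e2⟩ := hspan _ hcircK
    rw [hcirc] at e0 e1 e2
    simp only [Matrix.cons_val_zero, Matrix.cons_val_one, Matrix.head_cons,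
      Matrix.cons_val_two, Matrix.tail_cons] at e0 e1 e2
    have hβpos : 0 < β := by nlinarith
    have hαb : α * b₁ ≤ 0 := by nlinarith [mul_nonneg hβpos.le hc₁]
    have hαneg : α ≤ 0 := by
      by_contra h
      push_neg at h
      nlinarith [mul_pos h hb₁]
    nlinarith [mul_nonneg (neg_nonneg.2 hαneg) hb₂.le,
      mul_nonneg (by linarith : (0:ℤ) ≤ β - 1) hc₂]
  -- the three implications
  have I12 : distanceReducing (kerV a) M → reduces M (circuit a 1 2) := fun h =>
    h _ hcircK hcircne
  have I23 : reduces M (circuit a 1 2) → c₁ < c₂ + c₃ := by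
    rintro ⟨u, hu, hone⟩
    rw [hMdef] at hu
    simp only [Set.mem_insert_iff, Set.mem_singleton_iff] at hu
    rw [hcirc] at hone
    refine key23 b₁ b₂ c₁ c₂ c₃ (Pn:ℤ) (Qn:ℤ) (a 0 : ℤ) (a 1 : ℤ) (a 2 : ℤ) hb₂ hb hc₃ hc₁ hc₂ ha2
      (by linarith) hP0.le hQ0 hc₂P hc₃Q ?_
    rcases hu with rfl | rfl
    · exact Or.inl hone
    · exact Or.inr hone
  have I31 : c₁ < c₂ + c₃ → distanceReducing (kerV a) M := by
    intro h3 z hz hz0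
    obtain ⟨α, β, e0, e1, e2⟩ := hspan z hz
    rcases le_or_gt 0 β with hβ | hβ
    · rcases key31 b₁ b₂ c₁ c₂ c₃ α β z hb₂ hb hc₃ hc₁ hc₂ h3 e0 e1 e2 hz0 hβ with h | h
      · exact ⟨_, hbM, h⟩
      · exact ⟨_, hcM, h⟩
    · have hd := key31 b₁ b₂ c₁ c₂ c₃ (-α) (-β) (-z) hb₂ hb hc₃ hc₁ hc₂ h3
        (by simp only [Pi.neg_apply]; linear_combination - e0)
        (by simp only [Pi.neg_apply]; linear_combination - e1)
        (by simp only [Pi.neg_apply]; linear_combination - e2)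
        (neg_ne_zero.mpr hz0) (by linarith)
      rcases hd with h | h
      · exact ⟨_, hbM, (reducesOne_neg_iff _ _).mp h⟩
      · exact ⟨_, hcM, (reducesOne_neg_iff _ _).mp h⟩
  exact ⟨⟨I12, fun h => I31 (I23 h)⟩, ⟨fun h => I23 (I12 h), I31⟩⟩

end DistRed
end

section
/- Let C = (a₁, …, aₙ, b₁, …, b_m) be a 1×(n+m) matrix of positive integers (n, m ≥ 1) that is glued along ({1,…,n}, {n+1,…,n+m}). Let M = {u₁, …, u_{n−1}, v₁, …, v_{m−1}, w} ⊆ ker(C) be a Markov basis for C consisting of n+m−1 pairwise distinct elements such that: supp(u_i) ⊆ {1,…,n} for all i, and the projections of the u_i to the first n coordinates form a Markov basis for (a₁,…,aₙ); supp(v_j) ⊆ {n+1,…,n+m} for all j, and the projections of the v_j to the last m coordinates form a Markov basis for (b₁,…,b_m); and supp(w⁺) ⊆ {1,…,n}, supp(w⁻) ⊆ {n+1,…,n+m}. Write M_A = {u₁,…,u_{n−1}} and M_B = {v₁,…,v_{m−1}}, and let z_{i,j} denote the circuit of C supported on {i, j}. If M reduces the distance of the circuits of C, then at least one of the following holds: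 (1) there exists r ∈ {1,…,n} such that for every j ∈ {1,…,m} exactly one element of M reduces the distance of z_{r,n+j}, this unique element lies in M_B ∪ {w}, and the map sending j to this unique element is a bijection from {1,…,m} to M_B ∪ {w}; (2) there exists c ∈ {1,…,m} such that for every i ∈ {1,…,n} exactly one element of M reduces the distance of z_{i,n+c}, this unique element lies in M_A ∪ {w}, and the map sending i to this unique element is a bijection from {1,…,n} to M_A ∪ {w}. -/
open Pointwise

namespace DistRed

variable {n d : ℕ}

section AuxDR
variable {N : ℕ}

lemma aux_sum_eq_pos_sub_neg (x : Fin N → ℤ) :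
    ∑ k, x k = (∑ k, posP x k) - ∑ k, negP x k := by
  rw [← Finset.sum_sub_distrib]
  refine Finset.sum_congr rfl fun k _ => ?_
  simp only [posP, negP]; omega

lemma aux_posP_sum_nonneg (x : Fin N → ℤ) : 0 ≤ ∑ k, posP x k :=
  Finset.sum_nonneg fun k _ => le_max_right _ _

lemma aux_negP_sum_nonneg (x : Fin N → ℤ) : 0 ≤ ∑ k, negP x k :=
  Finset.sum_nonneg fun k _ => le_max_right _ _

lemma aux_posP_sum_zero {x : Fin N → ℤ} (h : ∀ k, x k ≤ 0) : ∑ k, posP x k = 0 :=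
  Finset.sum_eq_zero fun k _ => by simp only [posP]; have := h k; omega

lemma aux_negP_sum_zero {x : Fin N → ℤ} (h : ∀ k, 0 ≤ x k) : ∑ k, negP x k = 0 :=
  Finset.sum_eq_zero fun k _ => by simp only [negP]; have := h k; omega

lemma aux_ker_nonpos {C : Fin N → ℕ} (hC : ∀ k, 0 < C k) {x : Fin N → ℤ}
    (hx : x ∈ kerV C) (h : ∀ k, x k ≤ 0) : x = 0 := by
  have h1 : ∀ k ∈ Finset.univ, ((C k : ℤ) * x k) = 0 := by
    rw [← Finset.sum_eq_zero_iff_of_nonpos]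
    · exact hx
    · exact fun k _ => mul_nonpos_iff.mpr (Or.inl ⟨Int.natCast_nonneg _, h k⟩)
  funext k
  rcases mul_eq_zero.mp (h1 k (Finset.mem_univ k)) with h3 | h3
  · exact absurd h3 (by exact_mod_cast (hC k).ne')
  · exact h3

lemma aux_ker_nonneg {C : Fin N → ℕ} (hC : ∀ k, 0 < C k) {x : Fin N → ℤ}
    (hx : x ∈ kerV C) (h : ∀ k, 0 ≤ x k) : x = 0 := by
  have h1 : ∀ k ∈ Finset.univ, ((C k : ℤ) * x k) = 0 := by
    rw [← Finset.sum_eq_zero_iff_of_nonneg]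
    · exact hx
    · exact fun k _ => mul_nonneg (Int.natCast_nonneg _) (h k)
  funext k
  rcases mul_eq_zero.mp (h1 k (Finset.mem_univ k)) with h3 | h3
  · exact absurd h3 (by exact_mod_cast (hC k).ne')
  · exact h3

-- Analysis lemma for elements supported away from j0 (A-block type).
lemma lemU {z x : Fin N → ℤ} {i0 j0 : Fin N} {P Q : ℤ}
    (hij : i0 ≠ j0) (hP : 0 < P) (hQ : 0 < Q)
    (hzi : z i0 = P) (hzj : z j0 = -Q)
    (hz0 : ∀ k, k ≠ i0 → k ≠ j0 → z k = 0)
    (hx0 : x j0 = 0)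
    (hnp : (∀ k, x k ≤ 0) → x = 0) (hnn : (∀ k, 0 ≤ x k) → x = 0)
    (hred : reducesOne x z) :
    ((∀ k, k ≠ i0 → x k ≤ 0) ∧ (∑ k, negP x k) < ∑ k, posP x k) ∨
    ((∀ k, k ≠ i0 → 0 ≤ x k) ∧ (∑ k, posP x k) < ∑ k, negP x k) := by
  have hpz : ∀ k, k ≠ i0 → posP z k = 0 := by
    intro k hk
    rcases eq_or_ne k j0 with rfl | hk2
    · simp only [posP, hzj]; omega
    · simp only [posP, hz0 k hk hk2]; omega
  have hnz : ∀ k, k ≠ j0 → negP z k = 0 := by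
    intro k hk
    rcases eq_or_ne k i0 with rfl | hk2
    · simp only [negP, hzi]; omega
    · simp only [negP, hz0 k hk2 hk]; omega
  rcases hred with ⟨hv, hlt⟩ | ⟨hv, hlt⟩ | ⟨hv, hlt⟩ | ⟨hv, hlt⟩
  · -- C1 : posP x ≤ posP z, onorm (z - x) < onorm z
    have hs : ∀ k, k ≠ i0 → x k ≤ 0 := by
      intro k hk
      have h1 := hv k; rw [hpz k hk] at h1; simp only [posP] at h1; omega
    have hxi : x i0 ≤ P := by
      have h1 := hv i0; simp only [posP, hzi] at h1; omega
    have hpt : ∀ k : Fin N, |z k - x k| = |z k| - x k := by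
      intro k
      rcases eq_or_ne k i0 with rfl | hki
      · rw [hzi]; rw [abs_of_nonneg (by omega : (0:ℤ) ≤ P - x k), abs_of_nonneg hP.le]
      · rcases eq_or_ne k j0 with rfl | hkj
        · rw [hx0, sub_zero]; simp
        · have h1 := hs k hki
          rw [hz0 k hki hkj]
          simp only [zero_sub, abs_neg, abs_zero]
          rw [abs_of_nonpos h1]
    have hnorm : onorm (z - x) = onorm z - ∑ k, x k := by
      simp only [onorm, Pi.sub_apply, hpt]
      rw [← Finset.sum_sub_distrib]
    rw [hnorm] at hlt
    have h2 := aux_sum_eq_pos_sub_neg x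
    exact Or.inl ⟨hs, by omega⟩
  · -- C2 : negP x ≤ posP z, onorm (z + x) < onorm z
    have hs : ∀ k, k ≠ i0 → 0 ≤ x k := by
      intro k hk
      have h1 := hv k; rw [hpz k hk] at h1; simp only [negP] at h1; omega
    have hxi : -P ≤ x i0 := by
      have h1 := hv i0; simp only [negP, posP, hzi] at h1; omega
    have hpt : ∀ k : Fin N, |z k + x k| = |z k| + x k := by
      intro k
      rcases eq_or_ne k i0 with rfl | hki
      · rw [hzi]; rw [abs_of_nonneg (by omega : (0:ℤ) ≤ P + x k), abs_of_nonneg hP.le]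
      · rcases eq_or_ne k j0 with rfl | hkj
        · rw [hx0, add_zero]; simp
        · have h1 := hs k hki
          rw [hz0 k hki hkj]
          simp only [zero_add, abs_zero]
          rw [abs_of_nonneg h1]
    have hnorm : onorm (z + x) = onorm z + ∑ k, x k := by
      simp only [onorm, Pi.add_apply, hpt]
      rw [← Finset.sum_add_distrib]
    rw [hnorm] at hlt
    have h2 := aux_sum_eq_pos_sub_neg x
    exact Or.inr ⟨hs, by omega⟩
  · -- C3 : posP x ≤ negP z  → x ≤ 0 → x = 0 → contradiction
    exfalso
    have hs : ∀ k, x k ≤ 0 := by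
      intro k
      rcases eq_or_ne k j0 with rfl | hk
      · exact le_of_eq hx0
      · have h1 := hv k; rw [hnz k hk] at h1; simp only [posP] at h1; omega
    rw [hnp hs, add_zero] at hlt
    exact lt_irrefl _ hlt
  · -- C4 : negP x ≤ negP z → x ≥ 0 → x = 0 → contradiction
    exfalso
    have hs : ∀ k, 0 ≤ x k := by
      intro k
      rcases eq_or_ne k j0 with rfl | hk
      · exact ge_of_eq hx0
      · have h1 := hv k; rw [hnz k hk] at h1; simp only [negP] at h1; omega
    rw [hnn hs, sub_zero] at hlt
    exact lt_irrefl _ hlt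


-- Analysis lemma for elements supported away from i0 (B-block type).
lemma lemV {z x : Fin N → ℤ} {i0 j0 : Fin N} {P Q : ℤ}
    (hij : i0 ≠ j0) (hP : 0 < P) (hQ : 0 < Q)
    (hzi : z i0 = P) (hzj : z j0 = -Q)
    (hz0 : ∀ k, k ≠ i0 → k ≠ j0 → z k = 0)
    (hx0 : x i0 = 0)
    (hnp : (∀ k, x k ≤ 0) → x = 0) (hnn : (∀ k, 0 ≤ x k) → x = 0)
    (hred : reducesOne x z) :
    ((∀ k, k ≠ j0 → x k ≤ 0) ∧ (∑ k, negP x k) < ∑ k, posP x k) ∨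
    ((∀ k, k ≠ j0 → 0 ≤ x k) ∧ (∑ k, posP x k) < ∑ k, negP x k) := by
  have hpz : ∀ k, k ≠ i0 → posP z k = 0 := by
    intro k hk
    rcases eq_or_ne k j0 with rfl | hk2
    · simp only [posP, hzj]; omega
    · simp only [posP, hz0 k hk hk2]; omega
  have hnz : ∀ k, k ≠ j0 → negP z k = 0 := by
    intro k hk
    rcases eq_or_ne k i0 with rfl | hk2
    · simp only [negP, hzi]; omega
    · simp only [negP, hz0 k hk2 hk]; omega
  rcases hred with ⟨hv, hlt⟩ | ⟨hv, hlt⟩ | ⟨hv, hlt⟩ | ⟨hv, hlt⟩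
  · -- C1 : posP x ≤ posP z → x ≤ 0 → x = 0 → contradiction
    exfalso
    have hs : ∀ k, x k ≤ 0 := by
      intro k
      rcases eq_or_ne k i0 with rfl | hk
      · exact le_of_eq hx0
      · have h1 := hv k; rw [hpz k hk] at h1; simp only [posP] at h1; omega
    rw [hnp hs, sub_zero] at hlt
    exact lt_irrefl _ hlt
  · -- C2 : negP x ≤ posP z → x ≥ 0 → contradiction
    exfalso
    have hs : ∀ k, 0 ≤ x k := by
      intro k
      rcases eq_or_ne k i0 with rfl | hk
      · exact ge_of_eq hx0
      · have h1 := hv k; rw [hpz k hk] at h1; simp only [negP] at h1; omega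
    rw [hnn hs, add_zero] at hlt
    exact lt_irrefl _ hlt
  · -- C3 : posP x ≤ negP z
    have hs : ∀ k, k ≠ j0 → x k ≤ 0 := by
      intro k hk
      have h1 := hv k; rw [hnz k hk] at h1; simp only [posP] at h1; omega
    have hxj : x j0 ≤ Q := by
      have h1 := hv j0; simp only [posP, negP, hzj] at h1; omega
    have hpt : ∀ k : Fin N, |z k + x k| = |z k| - x k := by
      intro k
      rcases eq_or_ne k j0 with rfl | hkj
      · rw [hzj, abs_of_nonpos (by omega : -Q + x k ≤ 0),
            abs_of_nonpos (by omega : -Q ≤ 0)]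
        ring
      · rcases eq_or_ne k i0 with rfl | hki
        · rw [hx0, add_zero]; simp
        · have h1 := hs k hkj
          rw [hz0 k hki hkj]
          simp only [zero_add, abs_zero]
          rw [abs_of_nonpos h1]; omega
    have hnorm : onorm (z + x) = onorm z - ∑ k, x k := by
      simp only [onorm, Pi.add_apply, hpt]
      rw [← Finset.sum_sub_distrib]
    rw [hnorm] at hlt
    have h2 := aux_sum_eq_pos_sub_neg x
    exact Or.inl ⟨hs, by omega⟩
  · -- C4 : negP x ≤ negP z
    have hs : ∀ k, k ≠ j0 → 0 ≤ x k := by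
      intro k hk
      have h1 := hv k; rw [hnz k hk] at h1; simp only [negP] at h1; omega
    have hxj : -Q ≤ x j0 := by
      have h1 := hv j0; simp only [negP, hzj] at h1; omega
    have hpt : ∀ k : Fin N, |z k - x k| = |z k| + x k := by
      intro k
      rcases eq_or_ne k j0 with rfl | hkj
      · rw [hzj, abs_of_nonpos (by omega : -Q - x k ≤ 0),
            abs_of_nonpos (by omega : -Q ≤ 0)]
        ring
      · rcases eq_or_ne k i0 with rfl | hki
        · rw [hx0, sub_zero]; simp
        · have h1 := hs k hkj
          rw [hz0 k hki hkj]
          simp only [zero_sub, abs_neg, abs_zero]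
          rw [abs_of_nonneg h1]; omega
    have hnorm : onorm (z - x) = onorm z + ∑ k, x k := by
      simp only [onorm, Pi.sub_apply, hpt]
      rw [← Finset.sum_add_distrib]
    rw [hnorm] at hlt
    have h2 := aux_sum_eq_pos_sub_neg x
    exact Or.inr ⟨hs, by omega⟩

-- Analysis lemma for the mixed element w.
lemma lemW {z x : Fin N → ℤ} {i0 j0 : Fin N} {P Q : ℤ} {Ablk : Fin N → Prop}
    (hij : i0 ≠ j0) (hP : 0 < P) (hQ : 0 < Q)
    (hzi : z i0 = P) (hzj : z j0 = -Q)
    (hz0 : ∀ k, k ≠ i0 → k ≠ j0 → z k = 0)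
    (hAi : Ablk i0) (hAj : ¬ Ablk j0)
    (hxpos : ∀ k, 0 < x k → Ablk k) (hxneg : ∀ k, x k < 0 → ¬ Ablk k)
    (hnp : (∀ k, x k ≤ 0) → x = 0) (hnn : (∀ k, 0 ≤ x k) → x = 0)
    (hred : reducesOne x z) :
    ((∀ k, k ≠ i0 → x k ≤ 0) ∧
      (∑ k, negP x k) - (∑ k, posP x k) < 2 * min (-(x j0)) Q) ∨
    ((∀ k, k ≠ j0 → 0 ≤ x k) ∧
      (∑ k, posP x k) - (∑ k, negP x k) < 2 * min (x i0) P) := by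
  have hpz : ∀ k, k ≠ i0 → posP z k = 0 := by
    intro k hk
    rcases eq_or_ne k j0 with rfl | hk2
    · simp only [posP, hzj]; omega
    · simp only [posP, hz0 k hk hk2]; omega
  have hnz : ∀ k, k ≠ j0 → negP z k = 0 := by
    intro k hk
    rcases eq_or_ne k i0 with rfl | hk2
    · simp only [negP, hzi]; omega
    · simp only [negP, hz0 k hk2 hk]; omega
  rcases hred with ⟨hv, hlt⟩ | ⟨hv, hlt⟩ | ⟨hv, hlt⟩ | ⟨hv, hlt⟩
  · -- C1 : posP x ≤ posP z  (row type)
    have hs : ∀ k, k ≠ i0 → x k ≤ 0 := by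
      intro k hk
      have h1 := hv k; rw [hpz k hk] at h1; simp only [posP] at h1; omega
    have hxi : x i0 ≤ P := by
      have h1 := hv i0; simp only [posP, hzi] at h1; omega
    have hxj : x j0 ≤ 0 := hs j0 (Ne.symm hij)
    have hpt : ∀ k ∈ Finset.univ.erase j0, |z k - x k| = |z k| - x k := by
      intro k hk
      have hkj : k ≠ j0 := (Finset.mem_erase.mp hk).1
      rcases eq_or_ne k i0 with rfl | hki
      · rw [hzi, abs_of_nonneg (by omega : (0:ℤ) ≤ P - x k), abs_of_nonneg hP.le]
      · have h1 := hs k hki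
        rw [hz0 k hki hkj]
        simp only [zero_sub, abs_neg, abs_zero]
        rw [abs_of_nonpos h1]
    have hE : onorm (z - x) =
        (∑ k ∈ Finset.univ.erase j0, (|z k| - x k)) + |(-Q) - x j0| := by
      simp only [onorm, Pi.sub_apply]
      rw [← Finset.sum_erase_add Finset.univ _ (Finset.mem_univ j0), hzj]
      congr 1
      exact Finset.sum_congr rfl hpt
    have hoz : onorm z = (∑ k ∈ Finset.univ.erase j0, |z k|) + Q := by
      simp only [onorm]
      rw [← Finset.sum_erase_add Finset.univ _ (Finset.mem_univ j0), hzj,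
          abs_neg, abs_of_nonneg hQ.le]
    have hsum : (∑ k ∈ Finset.univ.erase j0, x k) + x j0 = ∑ k, x k :=
      Finset.sum_erase_add _ _ (Finset.mem_univ j0)
    rw [hE, hoz, Finset.sum_sub_distrib] at hlt
    have key : |(-Q) - x j0| < Q + ((∑ k, x k) - x j0) := by omega
    have hsx := aux_sum_eq_pos_sub_neg x
    refine Or.inl ⟨hs, ?_⟩
    rcases le_or_gt (-(x j0)) Q with h | h
    · rw [abs_of_nonpos (by omega : (-Q) - x j0 ≤ 0)] at key; omega
    · rw [abs_of_nonneg (by omega : (0:ℤ) ≤ (-Q) - x j0)] at key; omega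
  · -- C2 : negP x ≤ posP z → x ≥ 0 → contradiction
    exfalso
    have hs : ∀ k, 0 ≤ x k := by
      intro k
      rcases eq_or_ne k i0 with rfl | hk
      · by_contra hneg
        exact hxneg k (by omega) hAi
      · have h1 := hv k; rw [hpz k hk] at h1; simp only [negP] at h1; omega
    rw [hnn hs, add_zero] at hlt
    exact lt_irrefl _ hlt
  · -- C3 : posP x ≤ negP z → x ≤ 0 → contradiction
    exfalso
    have hs : ∀ k, x k ≤ 0 := by
      intro k
      rcases eq_or_ne k j0 with rfl | hk
      · by_contra hpos
        exact hAj (hxpos k (by omega))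
      · have h1 := hv k; rw [hnz k hk] at h1; simp only [posP] at h1; omega
    rw [hnp hs, add_zero] at hlt
    exact lt_irrefl _ hlt
  · -- C4 : negP x ≤ negP z  (column type)
    have hs : ∀ k, k ≠ j0 → 0 ≤ x k := by
      intro k hk
      have h1 := hv k; rw [hnz k hk] at h1; simp only [negP] at h1; omega
    have hxj : -Q ≤ x j0 := by
      have h1 := hv j0; simp only [negP, hzj] at h1; omega
    have hxi : 0 ≤ x i0 := hs i0 hij
    have hpt : ∀ k ∈ Finset.univ.erase i0, |z k - x k| = |z k| + x k := by
      intro k hk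
      have hki : k ≠ i0 := (Finset.mem_erase.mp hk).1
      rcases eq_or_ne k j0 with rfl | hkj
      · rw [hzj, abs_of_nonpos (by omega : -Q - x k ≤ 0),
            abs_of_nonpos (by omega : -Q ≤ 0)]
        ring
      · have h1 := hs k hkj
        rw [hz0 k hki hkj]
        simp only [zero_sub, abs_neg, abs_zero]
        rw [abs_of_nonneg h1]; omega
    have hE : onorm (z - x) =
        (∑ k ∈ Finset.univ.erase i0, (|z k| + x k)) + |P - x i0| := by
      simp only [onorm, Pi.sub_apply]
      rw [← Finset.sum_erase_add Finset.univ _ (Finset.mem_univ i0), hzi]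
      congr 1
      exact Finset.sum_congr rfl hpt
    have hoz : onorm z = (∑ k ∈ Finset.univ.erase i0, |z k|) + P := by
      simp only [onorm]
      rw [← Finset.sum_erase_add Finset.univ _ (Finset.mem_univ i0), hzi,
          abs_of_nonneg hP.le]
    have hsum : (∑ k ∈ Finset.univ.erase i0, x k) + x i0 = ∑ k, x k :=
      Finset.sum_erase_add _ _ (Finset.mem_univ i0)
    rw [hE, hoz, Finset.sum_add_distrib] at hlt
    have key : |P - x i0| < P - ((∑ k, x k) - x i0) := by omega
    have hsx := aux_sum_eq_pos_sub_neg x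
    refine Or.inr ⟨hs, ?_⟩
    rcases le_or_gt (x i0) P with h | h
    · rw [abs_of_nonneg (by omega : (0:ℤ) ≤ P - x i0)] at key; omega
    · rw [abs_of_nonpos (by omega : P - x i0 ≤ 0)] at key; omega


-- Pigeonhole: choice of an index avoided by all the `u k`.
lemma aux_exclude {α : Type*} {nn : ℕ} (hn : 1 ≤ nn) (u : Fin (nn-1) → α)
    (P : α → Fin nn → Prop)
    (hrow : ∀ (k : Fin (nn-1)) (i i' : Fin nn), P (u k) i → P (u k) i' → i = i') :
    ∃ r : Fin nn, ∀ k, ¬ P (u k) r := by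
  by_contra h
  push_neg at h
  choose g hg using h
  have hginj : Function.Injective g := by
    intro r r' he
    exact hrow (g r) r r' (hg r) (he ▸ hg r')
  have hc := Fintype.card_le_of_injective g hginj
  simp only [Fintype.card_fin] at hc
  omega

-- Cardinality of `range v ∪ {w}`.
lemma aux_ncardS {α : Type*} {mm : ℕ} (hm : 1 ≤ mm) (v : Fin (mm-1) → α) (w : α)
    (hvinj : Function.Injective v) (hvw : ∀ j, v j ≠ w) :
    (Set.range v ∪ {w}).Finite ∧ (Set.range v ∪ {w}).ncard = mm := by
  have hfin : (Set.range v).Finite := Set.finite_range v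
  have hw : w ∉ Set.range v := by rintro ⟨j, rfl⟩; exact hvw j rfl
  refine ⟨hfin.union (Set.finite_singleton w), ?_⟩
  rw [Set.union_singleton, Set.ncard_insert_of_notMem hw hfin,
      ← Set.image_univ, Set.ncard_image_of_injective _ hvinj, Set.ncard_univ]
  simp only [Nat.card_eq_fintype_card, Fintype.card_fin]
  omega

-- Main combinatorial step.
lemma aux_comb {α : Type*} {mm : ℕ} (S : Set α) (hfin : S.Finite) (hcard : S.ncard = mm)
    (Red : α → Fin mm → Prop)
    (huniq : ∀ x ∈ S, ∀ j j' : Fin mm, Red x j → Red x j' → j = j')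
    (hcov : ∀ j : Fin mm, ∃ x ∈ S, Red x j) :
    ∃ φ : Fin mm → α, (∀ j, φ j ∈ S ∧ Red (φ j) j ∧ ∀ x ∈ S, Red x j → x = φ j) ∧
      Function.Injective φ ∧ ∀ y ∈ S, ∃ j, φ j = y := by
  choose φ hφS hφred using hcov
  have hinj : Function.Injective φ := by
    intro j j' h
    exact huniq (φ j) (hφS j) j j' (hφred j) (by rw [h]; exact hφred j')
  have hrange : Set.range φ = S := by
    have hle : S.ncard ≤ (Set.range φ).ncard := by
      rw [hcard, ← Set.image_univ, Set.ncard_image_of_injective _ hinj, Set.ncard_univ]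
      simp
    exact Set.eq_of_subset_of_ncard_le (Set.range_subset_iff.mpr hφS) hle hfin
  refine ⟨φ, fun j => ⟨hφS j, hφred j, ?_⟩, hinj, ?_⟩
  · intro x hx hredx
    obtain ⟨j', hj'⟩ : x ∈ Set.range φ := hrange ▸ hx
    have he := huniq x hx j' j (hj' ▸ hφred j') hredx
    rw [← hj', he]
  · intro y hy
    have : y ∈ Set.range φ := by rw [hrange]; exact hy
    exact this

end AuxDR

/-- existence of distinguished circuits for glued monomial curves. -/
theorem glued_distinguished_circuits {n m : ℕ} (hn : 1 ≤ n) (hm : 1 ≤ m)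
    (C : Fin (n + m) → ℕ) (hC : ∀ i, 0 < C i)
    (hglue : gluedOn C (Finset.univ.filter (fun i : Fin (n + m) => i.val < n))
                       (Finset.univ.filter (fun i : Fin (n + m) => n ≤ i.val)))
    (u : Fin (n - 1) → Fin (n + m) → ℤ) (v : Fin (m - 1) → Fin (n + m) → ℤ)
    (w : Fin (n + m) → ℤ)
    (M : Set (Fin (n + m) → ℤ))
    (hMdef : M = Set.range u ∪ Set.range v ∪ {w})
    (huinj : Function.Injective u) (hvinj : Function.Injective v)
    (huv : ∀ i j, u i ≠ v j) (huw : ∀ i, u i ≠ w) (hvw : ∀ j, v j ≠ w)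
    (husupp : ∀ i (k : Fin (n + m)), n ≤ k.val → u i k = 0)
    (huMark : isMarkov (fun i : Fin n => C (Fin.castAdd m i))
        {p | ∃ i, p = fun t : Fin n => u i (Fin.castAdd m t)})
    (hvsupp : ∀ j (k : Fin (n + m)), k.val < n → v j k = 0)
    (hvMark : isMarkov (fun j : Fin m => C (Fin.natAdd n j))
        {p | ∃ j, p = fun t : Fin m => v j (Fin.natAdd n t)})
    (hwpos : ∀ k : Fin (n + m), 0 < w k → k.val < n)
    (hwneg : ∀ k : Fin (n + m), w k < 0 → n ≤ k.val)
    (hmark : isMarkov C M)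
    (hred : reducesCircuits C M) :
    (∃ r : Fin n, ∃ φ : Fin m → Fin (n + m) → ℤ,
      (∀ j : Fin m,
        φ j ∈ Set.range v ∪ {w} ∧ φ j ∈ M ∧
        reducesOne (φ j) (circuit C (Fin.castAdd m r) (Fin.natAdd n j)) ∧
        ∀ x ∈ M, reducesOne x (circuit C (Fin.castAdd m r) (Fin.natAdd n j)) → x = φ j) ∧
      Function.Injective φ ∧ (∀ y ∈ Set.range v ∪ {w}, ∃ j, φ j = y)) ∨
    (∃ c : Fin m, ∃ ψ : Fin n → Fin (n + m) → ℤ,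
      (∀ i : Fin n,
        ψ i ∈ Set.range u ∪ {w} ∧ ψ i ∈ M ∧
        reducesOne (ψ i) (circuit C (Fin.castAdd m i) (Fin.natAdd n c)) ∧
        ∀ x ∈ M, reducesOne x (circuit C (Fin.castAdd m i) (Fin.natAdd n c)) → x = ψ i) ∧
      Function.Injective ψ ∧ (∀ y ∈ Set.range u ∪ {w}, ∃ i, ψ i = y)) := by
  classical
  have hkerM : ∀ x ∈ M, x ∈ kerV C := hmark.1
  have huM : ∀ k, u k ∈ M := fun k => by rw [hMdef]; exact Or.inl (Or.inl ⟨k, rfl⟩)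
  have hvMem : ∀ l, v l ∈ M := fun l => by rw [hMdef]; exact Or.inl (Or.inr ⟨l, rfl⟩)
  have hwM : w ∈ M := by rw [hMdef]; exact Or.inr rfl
  have hij0 : ∀ (i : Fin n) (j : Fin m), Fin.castAdd m i ≠ Fin.natAdd n j := by
    intro i j h
    have h2 := congrArg Fin.val h
    simp only [Fin.coe_castAdd, Fin.coe_natAdd] at h2
    have h3 := i.isLt
    omega
  have hcastInj : ∀ (i i' : Fin n), Fin.castAdd m i = Fin.castAdd m i' → i = i' := by
    intro i i' h
    have h2 := congrArg Fin.val h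
    simp only [Fin.coe_castAdd] at h2
    exact Fin.ext h2
  have hnatInj : ∀ (j j' : Fin m), Fin.natAdd n j = Fin.natAdd n j' → j = j' := by
    intro j j' h
    have h2 := congrArg Fin.val h
    simp only [Fin.coe_natAdd] at h2
    exact Fin.ext (by omega)
  have hcf : ∀ (i0 j0 : Fin (n+m)), i0 ≠ j0 → ∃ P Q : ℤ, 0 < P ∧ 0 < Q ∧
      circuit C i0 j0 i0 = P ∧ circuit C i0 j0 j0 = -Q ∧
      ∀ k, k ≠ i0 → k ≠ j0 → circuit C i0 j0 k = 0 := by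
    intro i0 j0 hne
    have hg : 0 < Nat.gcd (C i0) (C j0) := Nat.gcd_pos_of_pos_left _ (hC i0)
    refine ⟨((C j0 / Nat.gcd (C i0) (C j0) : ℕ) : ℤ),
            ((C i0 / Nat.gcd (C i0) (C j0) : ℕ) : ℤ), ?_, ?_, ?_, ?_, ?_⟩
    · exact_mod_cast Nat.div_pos (Nat.le_of_dvd (hC j0) (Nat.gcd_dvd_right _ _)) hg
    · exact_mod_cast Nat.div_pos (Nat.le_of_dvd (hC i0) (Nat.gcd_dvd_left _ _)) hg
    · simp [circuit]
    · simp [circuit, hne.symm]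
    · intro k h1 h2; simp [circuit, h1, h2]
  -- analysis of A-supported elements
  have hUrow : ∀ (k : Fin (n-1)) (i : Fin n) (j : Fin m),
      reducesOne (u k) (circuit C (Fin.castAdd m i) (Fin.natAdd n j)) →
      ((∀ t, t ≠ Fin.castAdd m i → u k t ≤ 0) ∧
        (∑ t, negP (u k) t) < ∑ t, posP (u k) t) ∨
      ((∀ t, t ≠ Fin.castAdd m i → 0 ≤ u k t) ∧
        (∑ t, posP (u k) t) < ∑ t, negP (u k) t) := by
    intro k i j hredx
    obtain ⟨P, Q, hP, hQ, hzi, hzj, hz0⟩ := hcf _ _ (hij0 i j)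
    exact lemU (hij0 i j) hP hQ hzi hzj hz0
      (husupp k _ (Nat.le_add_right n j.1))
      (aux_ker_nonpos hC (hkerM _ (huM k)))
      (aux_ker_nonneg hC (hkerM _ (huM k))) hredx
  have hrowU : ∀ (k : Fin (n-1)) (i i' : Fin n) (j j' : Fin m),
      reducesOne (u k) (circuit C (Fin.castAdd m i) (Fin.natAdd n j)) →
      reducesOne (u k) (circuit C (Fin.castAdd m i') (Fin.natAdd n j')) → i = i' := by
    intro k i i' j j' h h'
    by_contra hne
    have hne0 : Fin.castAdd m i ≠ Fin.castAdd m i' := fun he => hne (hcastInj _ _ he)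
    have hNp := aux_posP_sum_nonneg (u k)
    have hNn := aux_negP_sum_nonneg (u k)
    rcases hUrow k i j h with ⟨ha, hb⟩ | ⟨ha, hb⟩ <;>
      rcases hUrow k i' j' h' with ⟨ha', hb'⟩ | ⟨ha', hb'⟩
    · have hall : ∀ t, u k t ≤ 0 := by
        intro t
        rcases eq_or_ne t (Fin.castAdd m i) with rfl | h2
        · exact ha' _ hne0
        · exact ha t h2
      have h0 := aux_posP_sum_zero hall
      omega
    · omega
    · omega
    · have hall : ∀ t, 0 ≤ u k t := by
        intro t
        rcases eq_or_ne t (Fin.castAdd m i) with rfl | h2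
        · exact ha' _ hne0
        · exact ha t h2
      have h0 := aux_negP_sum_zero hall
      omega
  -- analysis of B-supported elements
  have hVcolLem : ∀ (l : Fin (m-1)) (i : Fin n) (j : Fin m),
      reducesOne (v l) (circuit C (Fin.castAdd m i) (Fin.natAdd n j)) →
      ((∀ t, t ≠ Fin.natAdd n j → v l t ≤ 0) ∧
        (∑ t, negP (v l) t) < ∑ t, posP (v l) t) ∨
      ((∀ t, t ≠ Fin.natAdd n j → 0 ≤ v l t) ∧
        (∑ t, posP (v l) t) < ∑ t, negP (v l) t) := by
    intro l i j hredx
    obtain ⟨P, Q, hP, hQ, hzi, hzj, hz0⟩ := hcf _ _ (hij0 i j)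
    exact lemV (hij0 i j) hP hQ hzi hzj hz0
      (hvsupp l _ i.isLt)
      (aux_ker_nonpos hC (hkerM _ (hvMem l)))
      (aux_ker_nonneg hC (hkerM _ (hvMem l))) hredx
  have hcolV : ∀ (l : Fin (m-1)) (i i' : Fin n) (j j' : Fin m),
      reducesOne (v l) (circuit C (Fin.castAdd m i) (Fin.natAdd n j)) →
      reducesOne (v l) (circuit C (Fin.castAdd m i') (Fin.natAdd n j')) → j = j' := by
    intro l i i' j j' h h'
    by_contra hne
    have hne0 : Fin.natAdd n j ≠ Fin.natAdd n j' := fun he => hne (hnatInj _ _ he)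
    have hNp := aux_posP_sum_nonneg (v l)
    have hNn := aux_negP_sum_nonneg (v l)
    rcases hVcolLem l i j h with ⟨ha, hb⟩ | ⟨ha, hb⟩ <;>
      rcases hVcolLem l i' j' h' with ⟨ha', hb'⟩ | ⟨ha', hb'⟩
    · have hall : ∀ t, v l t ≤ 0 := by
        intro t
        rcases eq_or_ne t (Fin.natAdd n j) with rfl | h2
        · exact ha' _ hne0
        · exact ha t h2
      have h0 := aux_posP_sum_zero hall
      omega
    · omega
    · omega
    · have hall : ∀ t, 0 ≤ v l t := by
        intro t
        rcases eq_or_ne t (Fin.natAdd n j) with rfl | h2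
        · exact ha' _ hne0
        · exact ha t h2
      have h0 := aux_negP_sum_zero hall
      omega
  -- analysis of w
  have hWlem : ∀ (i : Fin n) (j : Fin m),
      reducesOne w (circuit C (Fin.castAdd m i) (Fin.natAdd n j)) →
      (∃ Q : ℤ, 0 < Q ∧ (∀ t, t ≠ Fin.castAdd m i → w t ≤ 0) ∧
        (∑ t, negP w t) - (∑ t, posP w t) < 2 * min (-(w (Fin.natAdd n j))) Q) ∨
      (∃ P : ℤ, 0 < P ∧ (∀ t, t ≠ Fin.natAdd n j → 0 ≤ w t) ∧
        (∑ t, posP w t) - (∑ t, negP w t) < 2 * min (w (Fin.castAdd m i)) P) := by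
    intro i j hredx
    obtain ⟨P, Q, hP, hQ, hzi, hzj, hz0⟩ := hcf _ _ (hij0 i j)
    rcases lemW (Ablk := fun t : Fin (n+m) => t.1 < n) (hij0 i j) hP hQ hzi hzj hz0
      i.isLt (by have h4 : (Fin.natAdd n j).1 = n + j.1 := rfl; omega)
      hwpos (fun t ht => by have := hwneg t ht; omega)
      (aux_ker_nonpos hC (hkerM _ hwM)) (aux_ker_nonneg hC (hkerM _ hwM)) hredx with hc | hc
    · exact Or.inl ⟨Q, hQ, hc.1, hc.2⟩
    · exact Or.inr ⟨P, hP, hc.1, hc.2⟩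
  have hWpair : ∀ (i i' : Fin n) (j j' : Fin m),
      reducesOne w (circuit C (Fin.castAdd m i) (Fin.natAdd n j)) →
      reducesOne w (circuit C (Fin.castAdd m i') (Fin.natAdd n j')) → i = i' ∨ j = j' := by
    intro i i' j j' h h'
    by_contra hcon
    push_neg at hcon
    obtain ⟨hii, hjj⟩ := hcon
    have hne0 : Fin.castAdd m i ≠ Fin.castAdd m i' := fun he => hii (hcastInj _ _ he)
    have hnej : Fin.natAdd n j ≠ Fin.natAdd n j' := fun he => hjj (hnatInj _ _ he)
    rcases hWlem i j h with ⟨Q, hQ, ha, hb⟩ | ⟨P, hP, ha, hb⟩ <;>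
      rcases hWlem i' j' h' with ⟨Q', hQ', ha', hb'⟩ | ⟨P', hP', ha', hb'⟩
    · -- row, row
      have hall : ∀ t, w t ≤ 0 := by
        intro t
        rcases eq_or_ne t (Fin.castAdd m i) with rfl | h2
        · exact ha' _ hne0
        · exact ha t h2
      have hw0 : w = 0 := aux_ker_nonpos hC (hkerM _ hwM) hall
      have h1 : w (Fin.natAdd n j) = 0 := by rw [hw0]; rfl
      have h2 := aux_posP_sum_zero hall
      have h3 := aux_negP_sum_zero (x := w) (fun t => by rw [hw0]; exact le_refl 0)
      rw [h1] at hb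
      omega
    · -- row, col
      have h1 : w (Fin.natAdd n j) = 0 :=
        le_antisymm (ha _ (Ne.symm (hij0 i j))) (ha' _ hnej)
      have h2 : w (Fin.castAdd m i') = 0 :=
        le_antisymm (ha _ (Ne.symm hne0)) (ha' _ (hij0 i' j'))
      rw [h1] at hb
      rw [h2] at hb'
      omega
    · -- col, row
      have h1 : w (Fin.natAdd n j') = 0 :=
        le_antisymm (ha' _ (Ne.symm (hij0 i' j'))) (ha _ (Ne.symm hnej))
      have h2 : w (Fin.castAdd m i) = 0 :=
        le_antisymm (ha' _ hne0) (ha _ (hij0 i j))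
      rw [h2] at hb
      rw [h1] at hb'
      omega
    · -- col, col
      have hall : ∀ t, 0 ≤ w t := by
        intro t
        rcases eq_or_ne t (Fin.natAdd n j) with rfl | h2
        · exact ha' _ hnej
        · exact ha t h2
      have hw0 : w = 0 := aux_ker_nonneg hC (hkerM _ hwM) hall
      have h1 : w (Fin.castAdd m i) = 0 := by rw [hw0]; rfl
      have h2 := aux_posP_sum_zero (x := w) (fun t => by rw [hw0]; exact le_refl 0)
      have h3 := aux_negP_sum_zero hall
      rw [h1] at hb
      omega
  have hWdich :
      (∀ (i i' : Fin n) (j j' : Fin m),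
        reducesOne w (circuit C (Fin.castAdd m i) (Fin.natAdd n j)) →
        reducesOne w (circuit C (Fin.castAdd m i') (Fin.natAdd n j')) → i = i') ∨
      (∀ (i i' : Fin n) (j j' : Fin m),
        reducesOne w (circuit C (Fin.castAdd m i) (Fin.natAdd n j)) →
        reducesOne w (circuit C (Fin.castAdd m i') (Fin.natAdd n j')) → j = j') := by
    by_cases hcase : ∀ (i i' : Fin n) (j j' : Fin m),
        reducesOne w (circuit C (Fin.castAdd m i) (Fin.natAdd n j)) →
        reducesOne w (circuit C (Fin.castAdd m i') (Fin.natAdd n j')) → i = i'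
    · exact Or.inl hcase
    · right
      push_neg at hcase
      obtain ⟨a, a', b, b', h1, h2, hne⟩ := hcase
      have hbb : b = b' := (hWpair a a' b b' h1 h2).resolve_left hne
      intro i i' j j' hr hr'
      have hj : j = b := by
        rcases hWpair i a j b hr h1 with h | h
        · rcases hWpair i a' j b' hr h2 with h' | h'
          · exact absurd (h.symm.trans h') hne
          · rw [hbb]; exact h'
        · exact h
      have hj' : j' = b := by
        rcases hWpair i' a j' b hr' h1 with h | h
        · rcases hWpair i' a' j' b' hr' h2 with h' | h'
          · exact absurd (h.symm.trans h') hne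
          · rw [hbb]; exact h'
        · exact h
      rw [hj, hj']
  rcases hWdich with hWr | hWc
  · -- w is row-consistent: conclusion (2)
    right
    obtain ⟨c, hc⟩ := aux_exclude hm v
      (fun x jj => ∃ ii : Fin n,
        reducesOne x (circuit C (Fin.castAdd m ii) (Fin.natAdd n jj)))
      (fun l jj jj' h h' => by
        obtain ⟨i1, h1⟩ := h
        obtain ⟨i2, h2⟩ := h'
        exact hcolV l i1 i2 jj jj' h1 h2)
    obtain ⟨hfin, hcard⟩ := aux_ncardS hn u w huinj huw
    have huniqS : ∀ x ∈ Set.range u ∪ {w}, ∀ ii ii' : Fin n,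
        reducesOne x (circuit C (Fin.castAdd m ii) (Fin.natAdd n c)) →
        reducesOne x (circuit C (Fin.castAdd m ii') (Fin.natAdd n c)) → ii = ii' := by
      rintro x (⟨k, rfl⟩ | rfl) ii ii' hr1 hr2
      · exact hrowU k ii ii' c c hr1 hr2
      · exact hWr ii ii' c c hr1 hr2
    have hcovS : ∀ ii : Fin n, ∃ x ∈ Set.range u ∪ {w},
        reducesOne x (circuit C (Fin.castAdd m ii) (Fin.natAdd n c)) := by
      intro ii
      obtain ⟨x, hxM, hxred⟩ := hred (Fin.castAdd m ii) (Fin.natAdd n c)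
        (by rw [Fin.lt_def]
            simp only [Fin.coe_castAdd, Fin.coe_natAdd]
            have := ii.isLt
            omega)
      rw [hMdef] at hxM
      rcases hxM with (⟨k, rfl⟩ | ⟨l, rfl⟩) | hxw
      · exact ⟨u k, Or.inl ⟨k, rfl⟩, hxred⟩
      · exact absurd ⟨ii, hxred⟩ (hc l)
      · exact ⟨x, Or.inr hxw, hxred⟩
    obtain ⟨ψ, h1, h2, h3⟩ := aux_comb _ hfin hcard _ huniqS hcovS
    refine ⟨c, ψ, fun i => ⟨(h1 i).1, ?_, (h1 i).2.1, ?_⟩, h2, h3⟩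
    · rcases (h1 i).1 with ⟨k, hk⟩ | hk
      · rw [← hk]; exact huM k
      · rw [hk]; exact hwM
    · intro x hxM hxred
      rw [hMdef] at hxM
      rcases hxM with (⟨k, rfl⟩ | ⟨l, rfl⟩) | hxw
      · exact (h1 i).2.2 _ (Or.inl ⟨k, rfl⟩) hxred
      · exact absurd ⟨i, hxred⟩ (hc l)
      · exact (h1 i).2.2 _ (Or.inr hxw) hxred
  · -- w is column-consistent: conclusion (1)
    left
    obtain ⟨r, hr⟩ := aux_exclude hn u
      (fun x ii => ∃ jj : Fin m,
        reducesOne x (circuit C (Fin.castAdd m ii) (Fin.natAdd n jj)))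
      (fun k ii ii' h h' => by
        obtain ⟨j1, h1⟩ := h
        obtain ⟨j2, h2⟩ := h'
        exact hrowU k ii ii' j1 j2 h1 h2)
    obtain ⟨hfin, hcard⟩ := aux_ncardS hm v w hvinj hvw
    have huniqS : ∀ x ∈ Set.range v ∪ {w}, ∀ jj jj' : Fin m,
        reducesOne x (circuit C (Fin.castAdd m r) (Fin.natAdd n jj)) →
        reducesOne x (circuit C (Fin.castAdd m r) (Fin.natAdd n jj')) → jj = jj' := by
      rintro x (⟨l, rfl⟩ | rfl) jj jj' hr1 hr2
      · exact hcolV l r r jj jj' hr1 hr2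
      · exact hWc r r jj jj' hr1 hr2
    have hcovS : ∀ jj : Fin m, ∃ x ∈ Set.range v ∪ {w},
        reducesOne x (circuit C (Fin.castAdd m r) (Fin.natAdd n jj)) := by
      intro jj
      obtain ⟨x, hxM, hxred⟩ := hred (Fin.castAdd m r) (Fin.natAdd n jj)
        (by rw [Fin.lt_def]
            simp only [Fin.coe_castAdd, Fin.coe_natAdd]
            have := r.isLt
            omega)
      rw [hMdef] at hxM
      rcases hxM with (⟨k, rfl⟩ | ⟨l, rfl⟩) | hxw
      · exact absurd ⟨jj, hxred⟩ (hr k)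
      · exact ⟨v l, Or.inl ⟨l, rfl⟩, hxred⟩
      · exact ⟨x, Or.inr hxw, hxred⟩
    obtain ⟨φ, h1, h2, h3⟩ := aux_comb _ hfin hcard _ huniqS hcovS
    refine ⟨r, φ, fun j => ⟨(h1 j).1, ?_, (h1 j).2.1, ?_⟩, h2, h3⟩
    · rcases (h1 j).1 with ⟨l, hl⟩ | hl
      · rw [← hl]; exact hvMem l
      · rw [hl]; exact hwM
    · intro x hxM hxred
      rw [hMdef] at hxM
      rcases hxM with (⟨k, rfl⟩ | ⟨l, rfl⟩) | hxw
      · exact absurd ⟨j, hxred⟩ (hr k)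
      · exact (h1 j).2.2 _ (Or.inl ⟨l, rfl⟩) hxred
      · exact (h1 j).2.2 _ (Or.inr hxw) hxred

end DistRed
end
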